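/- arXiv:2604.16660 — 9 statements merged into one kernel-verified Lean document; each statement's English description precedes it below -/
import Mathlib

section
/- Let X be a set, let Q : X × X → ℤ be an arrow finite quiver on X, let V ⊆ X, and let x ∈ V. Then λ_V(μ_x(λ_V(Q))) = λ_V(μ_x(Q)); that is, λ_V ∘ μ_x ∘ λ_V = λ_V ∘ μ_x as maps AF^X → AF^X. -/
-- Mutation of a quiver `Q : X → X → ℤ` at a vertex `x`.
open Classical in
noncomputable def mutateFun {X : Type*} (x : X) (Q : X → X → ℤ) : X → X → ℤ :=
  fun v w =>
    if v = x ∨ w = x then - Q v w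
    else Q v w + Q v x * max (Q x w) 0 + max (- Q v x) 0 * Q x w

-- Overfill of a quiver on a set of vertices `V`.
open Classical in
noncomputable def overfillFun {X : Type*} (V : Set X) (Q : X → X → ℤ) : X → X → ℤ :=
  fun a b => if a ∈ V ∨ b ∈ V then Q a b else 0

/-- For `x ∈ V`, `λ_V ∘ μ_x ∘ λ_V = λ_V ∘ μ_x`. -/
theorem overfill_mutation_near_commute {X : Type*} (Q : X → X → ℤ)
    (hQ : ∀ a b, Q a b = - Q b a) (V : Set X) (x : X) (hx : x ∈ V) :
    overfillFun V (mutateFun x (overfillFun V Q)) = overfillFun V (mutateFun x Q) := by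
  funext a b
  simp only [overfillFun, mutateFun]
  by_cases hab : a ∈ V ∨ b ∈ V
  · simp only [hab, if_true]
    by_cases h : a = x ∨ b = x
    · simp [h, hab]
    · simp [h, hab, Or.inr hx, Or.inl hx]
  · simp [hab]
end

section
/- Let X be a set. The strong topology on AF^X is finer than the weak topology on AF^X: every set open in the weak topology is open in the strong topology. Moreover, if X is infinite, the refinement is strict: there exists a set open in the strong topology that is not open in the weak topology. -/
-- Restriction of a quiver to a set of vertices `V`.
open Classical in
noncomputable def restrictFun {X : Type*} (V : Set X) (Q : X → X → ℤ) : X → X → ℤ :=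
  fun a b => if a ∈ V ∧ b ∈ V then Q a b else 0

/-- The set of arrow finite quivers on `X`: skew-symmetric integer matrices. -/
def AF (X : Type*) : Type _ := {Q : X → X → ℤ // ∀ a b, Q a b = - Q b a}

/-- The basic set `U_{Q,V}`. -/
def Uset {X : Type*} (Q : AF X) (V : Set X) : Set (AF X) :=
  {Q' | restrictFun V Q'.1 = restrictFun V Q.1}

/-- The basic set `W_{Q,V}`. -/
def Wset {X : Type*} (Q : AF X) (V : Set X) : Set (AF X) :=
  {Q' | overfillFun V Q'.1 = overfillFun V Q.1}

def UBasis (X : Type*) : Set (Set (AF X)) :=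
  {U | ∃ (Q : AF X) (V : Set X), V.Finite ∧ U = Uset Q V}

def WBasis (X : Type*) : Set (Set (AF X)) :=
  {U | ∃ (Q : AF X) (V : Set X), V.Finite ∧ U = Wset Q V}

/-- The weak topology on `AF X`, generated by the sets `U_{Q,V}` with `V` finite. -/
def weakTop (X : Type*) : TopologicalSpace (AF X) :=
  TopologicalSpace.generateFrom (UBasis X)

/-- The strong topology on `AF X`, generated by the sets `W_{Q,V}` with `V` finite. -/
def strongTop (X : Type*) : TopologicalSpace (AF X) :=
  TopologicalSpace.generateFrom (WBasis X)

/-- Locally finite quivers. -/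
def LFset (X : Type*) : Set (AF X) := {Q | ∀ x : X, {y : X | Q.1 x y ≠ 0}.Finite}

/-- Finite quivers: those with finite support. -/
def FinSet (X : Type*) : Set (AF X) := {Q | {x : X | ∃ y, Q.1 x y ≠ 0}.Finite}


open Classical

lemma restrict_eq_iff' {X : Type*} (V : Set X) (Q Q' : X → X → ℤ) :
    restrictFun V Q = restrictFun V Q' ↔ ∀ a b, a ∈ V → b ∈ V → Q a b = Q' a b := by
  constructor
  · intro h a b ha hb
    have := congrFun (congrFun h a) b
    simpa [restrictFun, ha, hb] using this
  · intro h
    funext a b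
    simp only [restrictFun]
    split_ifs with hc
    · exact h a b hc.1 hc.2
    · rfl

lemma overfill_eq_iff' {X : Type*} (V : Set X) (Q Q' : X → X → ℤ) :
    overfillFun V Q = overfillFun V Q' ↔ ∀ a b, a ∈ V ∨ b ∈ V → Q a b = Q' a b := by
  constructor
  · intro h a b hab
    have := congrFun (congrFun h a) b
    simpa [overfillFun, hab] using this
  · intro h
    funext a b
    simp only [overfillFun]
    split_ifs with hc
    · exact h a b hc
    · rfl

lemma ubasis_isBasis (X : Type*) :
    @TopologicalSpace.IsTopologicalBasis (AF X) (weakTop X) (UBasis X) := by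
  letI : TopologicalSpace (AF X) := weakTop X
  refine ⟨?_, ?_, rfl⟩
  · rintro t₁ ⟨Q₁, V₁, hV₁, rfl⟩ t₂ ⟨Q₂, V₂, hV₂, rfl⟩ Q hQ
    refine ⟨Uset Q (V₁ ∪ V₂), ⟨Q, V₁ ∪ V₂, hV₁.union hV₂, rfl⟩, by simp [Uset], ?_⟩
    rintro Q' hQ'
    have hQ1 := (restrict_eq_iff' V₁ Q.1 Q₁.1).1 hQ.1
    have hQ2 := (restrict_eq_iff' V₂ Q.1 Q₂.1).1 hQ.2
    have h' := (restrict_eq_iff' (V₁ ∪ V₂) Q'.1 Q.1).1 hQ'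
    constructor
    · exact (restrict_eq_iff' V₁ Q'.1 Q₁.1).2 fun a b ha hb =>
        (h' a b (Or.inl ha) (Or.inl hb)).trans (hQ1 a b ha hb)
    · exact (restrict_eq_iff' V₂ Q'.1 Q₂.1).2 fun a b ha hb =>
        (h' a b (Or.inr ha) (Or.inr hb)).trans (hQ2 a b ha hb)
  · refine Set.eq_univ_of_univ_subset ?_
    intro Q _
    exact Set.mem_sUnion.2 ⟨Uset Q ∅, ⟨Q, ∅, Set.finite_empty, rfl⟩, rfl⟩

/-- The strong topology refines the weak topology, and strictly so when `X` is infinite. -/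
theorem strong_finer_than_weak (X : Type*) :
    (∀ U : Set (AF X), @IsOpen _ (weakTop X) U → @IsOpen _ (strongTop X) U) ∧
    (Infinite X → ∃ U : Set (AF X), @IsOpen _ (strongTop X) U ∧ ¬ @IsOpen _ (weakTop X) U) := by
  constructor
  · -- strong refines weak
    intro U hU
    have hle : strongTop X ≤ weakTop X := by
      letI : TopologicalSpace (AF X) := strongTop X
      apply le_generateFrom
      rintro s ⟨Q, V, hV, rfl⟩
      have : Uset Q V = ⋃ Q' ∈ Uset Q V, Wset Q' V := by
        ext Q''
        simp only [Set.mem_iUnion]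
        constructor
        · intro h
          exact ⟨Q'', h, rfl⟩
        · rintro ⟨Q', hQ', hW⟩
          have h1 := (overfill_eq_iff' V Q''.1 Q'.1).1 hW
          have h2 := (restrict_eq_iff' V Q'.1 Q.1).1 hQ'
          exact (restrict_eq_iff' V Q''.1 Q.1).2 fun a b ha hb =>
            (h1 a b (Or.inl ha)).trans (h2 a b ha hb)
      rw [this]
      exact isOpen_biUnion fun Q' _ =>
        TopologicalSpace.isOpen_generateFrom_of_mem ⟨Q', V, hV, rfl⟩
    exact hle U hU
  · intro hX
    haveI := hX
    obtain ⟨x⟩ := (inferInstance : Nonempty X)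
    have hskew0 : ∀ a b : X, (0 : ℤ) = -0 := fun _ _ => by ring
    set Q₀ : AF X := ⟨fun _ _ => 0, fun a b => by simp⟩ with hQ₀
    refine ⟨Wset Q₀ {x}, ?_, ?_⟩
    · exact TopologicalSpace.isOpen_generateFrom_of_mem ⟨Q₀, {x}, Set.finite_singleton x, rfl⟩
    · intro hopen
      letI : TopologicalSpace (AF X) := weakTop X
      have hbasis := ubasis_isBasis X
      have hmem : Q₀ ∈ Wset Q₀ {x} := rfl
      obtain ⟨v, ⟨Q₁, W, hW, rfl⟩, hQ₀v, hsub⟩ :=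
        (hbasis.isOpen_iff.1 hopen) Q₀ hmem
      -- choose y outside W ∪ {x}
      obtain ⟨y, hy⟩ := ((hW.union (Set.finite_singleton x)).infinite_compl).nonempty
      have hyW : y ∉ W := fun h => hy (Or.inl h)
      have hyx : y ≠ x := fun h => hy (Or.inr h)
      -- build Q' with one arrow x → y
      set f : X → X → ℤ := fun a b =>
        if a = x ∧ b = y then 1 else if a = y ∧ b = x then -1 else 0 with hf
      have hskew : ∀ a b, f a b = - f b a := by
        intro a b
        by_cases h1 : a = x ∧ b = y
        · have : ¬ (b = x ∧ a = y) := fun h => hyx (h1.2 ▸ h.1.symm ▸ rfl)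
          simp [hf, h1, this, h1.1, h1.2, hyx, hyx.symm]
        · by_cases h2 : a = y ∧ b = x
          · have : ¬ (b = y ∧ a = x) := fun h => hyx (h2.1 ▸ h.2.symm ▸ rfl)
            simp only [hf, h1, h2, this, if_true, if_false, and_self, if_neg]
            split_ifs with h3 <;> first | omega | exact absurd h3.1 hyx
          · have h1' : ¬ (b = x ∧ a = y) := fun h => h2 ⟨h.2, h.1⟩
            have h2' : ¬ (b = y ∧ a = x) := fun h => h1 ⟨h.2, h.1⟩
            simp [hf, h1, h2, h1', h2']
      set Q' : AF X := ⟨f, hskew⟩ with hQ'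
      have hQ'v : Q' ∈ Uset Q₁ W := by
        have hz : Q' ∈ Uset Q₀ W := by
          refine (restrict_eq_iff' W Q'.1 Q₀.1).2 fun a b ha hb => ?_
          have h1 : ¬ (a = x ∧ b = y) := fun h => hyW (h.2 ▸ hb)
          have h2 : ¬ (a = y ∧ b = x) := fun h => hyW (h.1 ▸ ha)
          simp [hQ', hf, h1, h2, hQ₀]
        have h0 := (restrict_eq_iff' W Q₀.1 Q₁.1).1 hQ₀v
        have h1 := (restrict_eq_iff' W Q'.1 Q₀.1).1 hz
        exact (restrict_eq_iff' W Q'.1 Q₁.1).2 fun a b ha hb =>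
          (h1 a b ha hb).trans (h0 a b ha hb)
      have hQ'W : Q' ∈ Wset Q₀ {x} := hsub hQ'v
      have := (overfill_eq_iff' {x} Q'.1 Q₀.1).1 hQ'W x y (Or.inl rfl)
      simp [hQ', hf, hyx.symm, hQ₀] at this
end

section
/- Let X be a set and x ∈ X. The mutation map μ_x : AF^X → AF^X is an involution (μ_x ∘ μ_x = id) and is a homeomorphism of AF^X equipped with the weak topology; it is likewise a homeomorphism of AF^X equipped with the strong topology. -/
/-- Mutation as a map `AF X → AF X`. -/
noncomputable def AF.mut {X : Type*} (x : X) (Q : AF X) : AF X :=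
  ⟨mutateFun x Q.1, by
    intro a b
    have h := Q.2
    simp only [mutateFun]
    by_cases ha : a = x
    · rw [if_pos (Or.inl ha), if_pos (Or.inr ha), h a b]
    · by_cases hb : b = x
      · rw [if_pos (Or.inr hb), if_pos (Or.inl hb), h a b]
      · rw [if_neg (fun hc => hc.elim ha hb), if_neg (fun hc => hc.elim hb ha),
          h b a, h b x, h x a]
        simp only [neg_neg]
        ring⟩


lemma mutateFun_invol {X : Type*} (x : X) (Q : X → X → ℤ) :
    mutateFun x (mutateFun x Q) = Q := by
  classical
  funext v w
  simp only [mutateFun]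
  by_cases h : v = x ∨ w = x
  · rw [if_pos h, if_pos h, neg_neg]
  · push_neg at h
    obtain ⟨hv, hw⟩ := h
    rw [if_neg (fun hc => hc.elim hv hw), if_neg (fun hc => hc.elim hv hw)]
    simp only [eq_self_iff_true, or_true, true_or, if_true, neg_neg]
    rcases le_total (Q v x) 0 with h1 | h1 <;> rcases le_total (Q x w) 0 with h2 | h2
    · rw [max_eq_right h2, max_eq_left (neg_nonneg.2 h1),
        max_eq_left (neg_nonneg.2 h2), max_eq_right h1]
      ring
    · rw [max_eq_left h2, max_eq_left (neg_nonneg.2 h1),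
        max_eq_right (neg_nonpos.2 h2), max_eq_right h1]
      ring
    · rw [max_eq_right h2, max_eq_right (neg_nonpos.2 h1),
        max_eq_left (neg_nonneg.2 h2), max_eq_left h1]
      ring
    · rw [max_eq_left h2, max_eq_right (neg_nonpos.2 h1),
        max_eq_right (neg_nonpos.2 h2), max_eq_left h1]
      ring

lemma restrict_mut_congr {X : Type*} (x : X) (V : Set X) (A B : X → X → ℤ)
    (h : restrictFun (insert x V) A = restrictFun (insert x V) B) :
    restrictFun V (mutateFun x A) = restrictFun V (mutateFun x B) := by
  classical
  have key : ∀ a b, a ∈ insert x V → b ∈ insert x V → A a b = B a b := by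
    intro a b ha hb
    have h2 := congrFun (congrFun h a) b
    simpa only [restrictFun, if_pos (And.intro ha hb)] using h2
  funext a b
  simp only [restrictFun]
  split_ifs with hab
  · obtain ⟨ha, hb⟩ := hab
    simp only [mutateFun]
    rw [key a b (Or.inr ha) (Or.inr hb), key a x (Or.inr ha) (Or.inl rfl),
        key x b (Or.inl rfl) (Or.inr hb)]
  · rfl

lemma overfill_mut_congr {X : Type*} (x : X) (V : Set X) (A B : X → X → ℤ)
    (h : overfillFun (insert x V) A = overfillFun (insert x V) B) :
    overfillFun V (mutateFun x A) = overfillFun V (mutateFun x B) := by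
  classical
  have key : ∀ a b, a ∈ insert x V ∨ b ∈ insert x V → A a b = B a b := by
    intro a b hab
    have h2 := congrFun (congrFun h a) b
    simpa only [overfillFun, if_pos hab] using h2
  funext a b
  simp only [overfillFun]
  split_ifs with hab
  · simp only [mutateFun]
    have hab' : a ∈ insert x V ∨ b ∈ insert x V :=
      hab.imp (fun h => Or.inr h) (fun h => Or.inr h)
    rw [key a b hab', key a x (Or.inr (Or.inl rfl)),
        key x b (Or.inl (Or.inl rfl))]
  · rfl

/-- Mutation at `x` is an involution and a self-homeomorphism of `AF^X` for both
the weak and the strong topology. -/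
theorem mutation_homeomorphism {X : Type*} (x : X) :
    (∀ Q : AF X, AF.mut x (AF.mut x Q) = Q) ∧
    @IsHomeomorph (AF X) (AF X) (weakTop X) (weakTop X) (AF.mut x) ∧
    @IsHomeomorph (AF X) (AF X) (strongTop X) (strongTop X) (AF.mut x) := by
  classical
  have inv : ∀ Q : AF X, AF.mut x (AF.mut x Q) = Q := fun Q =>
    Subtype.ext (mutateFun_invol x Q.1)
  have contW : @Continuous _ _ (weakTop X) (weakTop X) (AF.mut x) := by
    rw [weakTop, continuous_generateFrom_iff]
    letI : TopologicalSpace (AF X) := TopologicalSpace.generateFrom (UBasis X)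
    rintro s ⟨Q, V, hV, rfl⟩
    have heq : AF.mut x ⁻¹' Uset Q V =
        ⋃ Q' ∈ AF.mut x ⁻¹' Uset Q V, Uset Q' (insert x V) := by
      ext R
      constructor
      · intro hR
        exact Set.mem_biUnion hR rfl
      · rintro hR
        simp only [Set.mem_iUnion] at hR
        obtain ⟨Q', hQ', hR⟩ := hR
        have hc : restrictFun V (mutateFun x R.1) = restrictFun V (mutateFun x Q'.1) :=
          restrict_mut_congr x V R.1 Q'.1 hR
        show restrictFun V (AF.mut x R).1 = restrictFun V Q.1
        rw [show (AF.mut x R).1 = mutateFun x R.1 from rfl, hc]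
        exact hQ'
    rw [heq]
    exact isOpen_biUnion fun Q' _ =>
      TopologicalSpace.isOpen_generateFrom_of_mem ⟨Q', insert x V, hV.insert x, rfl⟩
  have contS : @Continuous _ _ (strongTop X) (strongTop X) (AF.mut x) := by
    rw [strongTop, continuous_generateFrom_iff]
    letI : TopologicalSpace (AF X) := TopologicalSpace.generateFrom (WBasis X)
    rintro s ⟨Q, V, hV, rfl⟩
    have heq : AF.mut x ⁻¹' Wset Q V =
        ⋃ Q' ∈ AF.mut x ⁻¹' Wset Q V, Wset Q' (insert x V) := by
      ext R
      constructor
      · intro hR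
        exact Set.mem_biUnion hR rfl
      · rintro hR
        simp only [Set.mem_iUnion] at hR
        obtain ⟨Q', hQ', hR⟩ := hR
        have hc : overfillFun V (mutateFun x R.1) = overfillFun V (mutateFun x Q'.1) :=
          overfill_mut_congr x V R.1 Q'.1 hR
        show overfillFun V (AF.mut x R).1 = overfillFun V Q.1
        rw [show (AF.mut x R).1 = mutateFun x R.1 from rfl, hc]
        exact hQ'
    rw [heq]
    exact isOpen_biUnion fun Q' _ =>
      TopologicalSpace.isOpen_generateFrom_of_mem ⟨Q', insert x V, hV.insert x, rfl⟩
  refine ⟨inv, ?_, ?_⟩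
  · exact @Homeomorph.isHomeomorph _ _ (weakTop X) (weakTop X)
      (@Homeomorph.mk _ _ (weakTop X) (weakTop X) ⟨AF.mut x, AF.mut x, inv, inv⟩ contW contW)
  · exact @Homeomorph.isHomeomorph _ _ (strongTop X) (strongTop X)
      (@Homeomorph.mk _ _ (strongTop X) (strongTop X) ⟨AF.mut x, AF.mut x, inv, inv⟩ contS contS)
end

section
/- The space AF^ℕ equipped with the weak topology is homeomorphic to the Baire space ℕ^ℕ (the countable product of copies of the discrete space ℕ), and the space LF^ℕ of locally finite quivers, equipped with the subspace topology inherited from the strong topology on AF^ℕ, is also homeomorphic to ℕ^ℕ. -/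
-- === auxiliary ===
noncomputable def unrr (f : ℕ × ℕ → ℤ) : ℕ → ℕ → ℤ := fun a b =>
  if a < b then f (a, b - a - 1) else if b < a then - f (b, a - b - 1) else 0

lemma unrr_skew (f : ℕ × ℕ → ℤ) : ∀ a b, unrr f a b = - unrr f b a := by
  intro a b
  rcases lt_trichotomy a b with h | h | h
  · simp [unrr, h, lt_asymm h]
  · subst h; simp [unrr]
  · simp [unrr, h, lt_asymm h]

lemma unrr_rr (Q : ℕ → ℕ → ℤ) (hQ : ∀ a b, Q a b = - Q b a) :
    unrr (fun p => Q p.1 (p.1 + 1 + p.2)) = Q := by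
  funext a b
  rcases lt_trichotomy a b with h | h | h
  · rw [unrr, if_pos h]
    show Q a (a + 1 + (b - a - 1)) = Q a b
    congr 1; omega
  · subst h
    have h2 := hQ a a
    rw [unrr, if_neg (lt_irrefl a)]
    simp only [lt_irrefl, if_false]
    omega
  · rw [unrr, if_neg (lt_asymm h), if_pos h]
    show - Q b (b + 1 + (a - b - 1)) = Q a b
    rw [hQ a b]
    congr 2; omega

lemma rr_unrr (f : ℕ × ℕ → ℤ) (p : ℕ × ℕ) : unrr f p.1 (p.1 + 1 + p.2) = f p := by
  rw [unrr, if_pos (by omega)]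
  congr 1
  ext
  · rfl
  · show p.1 + 1 + p.2 - p.1 - 1 = p.2; omega

theorem isOpen_of_determined {ι : Type*} {α : ι → Type*}
    [∀ i, TopologicalSpace (α i)] [∀ i, DiscreteTopology (α i)]
    (s : Set (∀ i, α i)) (F : Finset ι)
    (h : ∀ f g : ∀ i, α i, (∀ i ∈ F, f i = g i) → f ∈ s → g ∈ s) :
    IsOpen s := by
  have hs : s = ⋃ f ∈ s, ⋂ i ∈ F, {g : ∀ i, α i | g i = f i} := by
    ext g
    simp only [Set.mem_iUnion, Set.mem_iInter, Set.mem_setOf_eq]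
    constructor
    · exact fun hg => ⟨g, hg, fun i _ => rfl⟩
    · rintro ⟨f, hf, hfg⟩
      exact h f g (fun i hi => (hfg i hi).symm) hf
  rw [hs]
  refine isOpen_biUnion fun f _ => isOpen_biInter_finset fun i _ => ?_
  exact (continuous_apply i).isOpen_preimage {f i} (isOpen_discrete _)

noncomputable def piDiscreteCongr {ι ι' : Type*} {α β : Type*} (σ : ι ≃ ι') (τ : α ≃ β) :
    @Homeomorph (ι → α) (ι' → β) (@Pi.topologicalSpace ι (fun _ => α) (fun _ => ⊥))
      (@Pi.topologicalSpace ι' (fun _ => β) (fun _ => ⊥)) := by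
  letI : TopologicalSpace α := ⊥
  letI : TopologicalSpace β := ⊥
  haveI : DiscreteTopology α := ⟨rfl⟩
  haveI : DiscreteTopology β := ⟨rfl⟩
  exact
  { toEquiv := Equiv.arrowCongr σ τ
    continuous_toFun := continuous_pi fun j =>
      continuous_of_discreteTopology.comp (continuous_apply (σ.symm j))
    continuous_invFun := continuous_pi fun i =>
      continuous_of_discreteTopology.comp (continuous_apply (σ i)) }
lemma mem_Uset_iff {Q Q' : AF ℕ} {V : Set ℕ} :
    Q' ∈ Uset Q V ↔ ∀ a ∈ V, ∀ b ∈ V, Q'.1 a b = Q.1 a b := by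
  constructor
  · intro h a ha b hb
    have h2 : restrictFun V Q'.1 = restrictFun V Q.1 := h
    have h3 := congrFun (congrFun h2 a) b
    simpa [restrictFun, ha, hb] using h3
  · intro h
    show restrictFun V Q'.1 = restrictFun V Q.1
    funext a b
    by_cases hab : a ∈ V ∧ b ∈ V
    · simp [restrictFun, hab, h a hab.1 b hab.2]
    · simp [restrictFun, hab]

lemma mem_Wset_iff {Q Q' : AF ℕ} {V : Set ℕ} :
    Q' ∈ Wset Q V ↔ ∀ a b, (a ∈ V ∨ b ∈ V) → Q'.1 a b = Q.1 a b := by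
  constructor
  · intro h a b hab
    have h2 : overfillFun V Q'.1 = overfillFun V Q.1 := h
    have h3 := congrFun (congrFun h2 a) b
    simpa [overfillFun, hab] using h3
  · intro h
    show overfillFun V Q'.1 = overfillFun V Q.1
    funext a b
    by_cases hab : a ∈ V ∨ b ∈ V
    · simp [overfillFun, hab, h a b hab]
    · simp [overfillFun, hab]

noncomputable def e1 : AF ℕ ≃ (ℕ × ℕ → ℤ) where
  toFun Q := fun p => Q.1 p.1 (p.1 + 1 + p.2)
  invFun f := ⟨unrr f, unrr_skew f⟩
  left_inv Q := Subtype.ext (unrr_rr Q.1 Q.2)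
  right_inv f := funext fun p => rr_unrr f p

noncomputable def homeo1 :
    @Homeomorph (AF ℕ) (ℕ × ℕ → ℤ) (weakTop ℕ)
      (@Pi.topologicalSpace (ℕ × ℕ) (fun _ => ℤ) (fun _ => ⊥)) := by
  letI : TopologicalSpace ℤ := ⊥
  haveI : DiscreteTopology ℤ := ⟨rfl⟩
  letI : TopologicalSpace (AF ℕ) := weakTop ℕ
  refine { toEquiv := e1, continuous_toFun := ?_, continuous_invFun := ?_ }
  · apply continuous_pi
    intro p
    rw [continuous_discrete_rng]
    intro c
    have hset : (fun Q : AF ℕ => e1 Q p) ⁻¹' {c}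
        = ⋃ Q0 ∈ {Q : AF ℕ | Q.1 p.1 (p.1 + 1 + p.2) = c},
            Uset Q0 {p.1, p.1 + 1 + p.2} := by
      ext Q'
      simp only [Set.mem_preimage, Set.mem_singleton_iff, Set.mem_iUnion, Set.mem_setOf_eq]
      constructor
      · intro h
        exact ⟨Q', h, by show restrictFun _ _ = restrictFun _ _; rfl⟩
      · rintro ⟨Q0, h0, hU⟩
        have := mem_Uset_iff.mp hU p.1 (Set.mem_insert _ _) (p.1 + 1 + p.2)
          (Set.mem_insert_of_mem _ rfl)
        show Q'.1 p.1 (p.1 + 1 + p.2) = c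
        rw [this, h0]
    show IsOpen ((fun Q : AF ℕ => e1 Q p) ⁻¹' {c})
    rw [hset]
    refine isOpen_biUnion fun Q0 _ => ?_
    exact TopologicalSpace.GenerateOpen.basic _
      ⟨Q0, {p.1, p.1 + 1 + p.2}, (Set.finite_singleton _).insert _, rfl⟩
  · show @Continuous _ _ _ (TopologicalSpace.generateFrom (UBasis ℕ)) e1.symm
    rw [continuous_generateFrom_iff]
    rintro s ⟨Q, V, hV, rfl⟩
    apply isOpen_of_determined _
      ((hV.toFinset ×ˢ hV.toFinset).image fun q : ℕ × ℕ => (q.1, q.2 - q.1 - 1))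
    intro f g hfg hf
    have key : ∀ a ∈ V, ∀ b ∈ V, unrr f a b = unrr g a b := by
      intro a ha b hb
      rcases lt_trichotomy a b with h | h | h
      · rw [unrr, unrr, if_pos h, if_pos h]
        exact hfg _ (Finset.mem_image.mpr ⟨(a, b), Finset.mem_product.mpr
          ⟨hV.mem_toFinset.mpr ha, hV.mem_toFinset.mpr hb⟩, rfl⟩)
      · subst h; simp [unrr]
      · rw [unrr, unrr, if_neg (lt_asymm h), if_neg (lt_asymm h), if_pos h, if_pos h]
        rw [hfg _ (Finset.mem_image.mpr ⟨(b, a), Finset.mem_product.mpr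
          ⟨hV.mem_toFinset.mpr hb, hV.mem_toFinset.mpr ha⟩, rfl⟩)]
    show e1.symm g ∈ Uset Q V
    rw [mem_Uset_iff]
    intro a ha b hb
    have hf' := mem_Uset_iff.mp (hf : e1.symm f ∈ Uset Q V) a ha b hb
    calc (e1.symm g).1 a b = unrr g a b := rfl
      _ = unrr f a b := (key a ha b hb).symm
      _ = Q.1 a b := hf'

-- === Part 2 ===
abbrev Cfin : Type := {g : ℕ → ℤ // (Function.support g).Finite}

noncomputable def CfinToFinsupp (g : Cfin) : ℕ →₀ ℤ :=
  ⟨g.2.toFinset, g.1, fun a => by simp [Function.mem_support]⟩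

lemma CfinToFinsupp_inj : Function.Injective CfinToFinsupp := by
  intro g g' h
  apply Subtype.ext
  funext a
  exact congrFun (congrArg (fun F : ℕ →₀ ℤ => (F : ℕ → ℤ)) h) a

instance : Countable Cfin := CfinToFinsupp_inj.countable

noncomputable def natToCfin (n : ℕ) : Cfin :=
  ⟨fun k => if k = n then 1 else 0, Set.Finite.subset (Set.finite_singleton n)
    (by intro k hk
        by_cases hkn : k = n
        · exact hkn
        · simp [Function.mem_support, hkn] at hk)⟩

instance : Infinite Cfin := by
  apply Infinite.of_injective natToCfin
  intro m n h
  by_contra hmn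
  have := congrFun (congrArg Subtype.val h) m
  simp [natToCfin, hmn] at this

abbrev LF : Type := {Q : AF ℕ // Q ∈ LFset ℕ}

noncomputable def e2 : LF ≃ (ℕ → Cfin) where
  toFun Q := fun n => ⟨fun k => Q.1.1 n (n + 1 + k), by
    have h1 : Function.support (fun k => Q.1.1 n (n + 1 + k))
        = (fun k => n + 1 + k) ⁻¹' {y | Q.1.1 n y ≠ 0} := rfl
    rw [h1]
    exact Set.Finite.preimage (Set.injOn_of_injective (fun a b => by omega)) (Q.2 n)⟩
  invFun f := ⟨⟨unrr (fun p => (f p.1).1 p.2), unrr_skew _⟩, by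
    intro x
    apply Set.Finite.subset ((Set.finite_Iio x).union ((f x).2.image (fun k => x + 1 + k)))
    intro y hy
    simp only [Set.mem_setOf_eq] at hy
    rcases lt_trichotomy y x with h | h | h
    · exact Or.inl h
    · exfalso; subst h; rw [unrr, if_neg (lt_irrefl y)] at hy
      simp [lt_irrefl] at hy
    · right
      rw [unrr, if_pos h] at hy
      have hmem : (y - x - 1) ∈ Function.support ((f x).1) := hy
      exact (Set.mem_image _ _ _).mpr ⟨y - x - 1, hmem, by show x + 1 + (y - x - 1) = y; omega⟩⟩
  left_inv Q := Subtype.ext (Subtype.ext (unrr_rr Q.1.1 Q.1.2))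
  right_inv f := funext fun n => Subtype.ext (funext fun k => rr_unrr (fun p => (f p.1).1 p.2) (n, k))

noncomputable def homeo2 :
    @Homeomorph LF (ℕ → Cfin)
      (TopologicalSpace.induced (Subtype.val : LF → AF ℕ) (strongTop ℕ))
      (@Pi.topologicalSpace ℕ (fun _ => Cfin) (fun _ => ⊥)) := by
  letI : TopologicalSpace Cfin := ⊥
  haveI : DiscreteTopology Cfin := ⟨rfl⟩
  letI tAF : TopologicalSpace (AF ℕ) := strongTop ℕ
  letI : TopologicalSpace LF := TopologicalSpace.induced (Subtype.val : LF → AF ℕ) (strongTop ℕ)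
  refine { toEquiv := e2, continuous_toFun := ?_, continuous_invFun := ?_ }
  · apply continuous_pi
    intro n
    rw [continuous_discrete_rng]
    intro c
    show IsOpen ((fun Q : LF => e2 Q n) ⁻¹' {c})
    rw [isOpen_induced_iff]
    refine ⟨⋃ Q0 ∈ {Q0 : AF ℕ | ∀ k, Q0.1 n (n + 1 + k) = c.1 k}, Wset Q0 {n}, ?_, ?_⟩
    · refine isOpen_biUnion fun Q0 _ => ?_
      exact TopologicalSpace.GenerateOpen.basic _ ⟨Q0, {n}, Set.finite_singleton n, rfl⟩
    · ext Q
      simp only [Set.mem_preimage, Set.mem_iUnion, Set.mem_singleton_iff, Set.mem_setOf_eq]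
      constructor
      · rintro ⟨Q0, h0, hW⟩
        apply Subtype.ext
        funext k
        show Q.1.1 n (n + 1 + k) = c.1 k
        rw [mem_Wset_iff.mp hW n (n + 1 + k) (Or.inl rfl), h0 k]
      · intro h
        refine ⟨Q.1, fun k => ?_, mem_Wset_iff.mpr fun a b _ => rfl⟩
        exact congrFun (congrArg Subtype.val h) k
  · rw [continuous_induced_rng]
    show @Continuous _ _ _ (TopologicalSpace.generateFrom (WBasis ℕ))
      (Subtype.val ∘ e2.symm)
    rw [continuous_generateFrom_iff]
    rintro s ⟨Q, V, hV, rfl⟩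
    apply isOpen_of_determined _ (Finset.range (hV.toFinset.sup id + 1))
    intro f g hfg hf
    have hb : ∀ m, m ≤ hV.toFinset.sup id → f m = g m := fun m hm =>
      hfg m (Finset.mem_range.mpr (by omega))
    have hVle : ∀ x ∈ V, x ≤ hV.toFinset.sup id := fun x hx =>
      Finset.le_sup (f := id) (hV.mem_toFinset.mpr hx)
    have key : ∀ a b, (a ∈ V ∨ b ∈ V) →
        unrr (fun p => (f p.1).1 p.2) a b = unrr (fun p => (g p.1).1 p.2) a b := by
      intro a b hab
      rcases lt_trichotomy a b with h | h | h
      · rw [unrr, unrr, if_pos h, if_pos h]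
        have ha : a ≤ hV.toFinset.sup id := by
          rcases hab with h1 | h1
          · exact hVle a h1
          · exact le_trans (le_of_lt h) (hVle b h1)
        rw [hb a ha]
      · subst h; simp [unrr]
      · rw [unrr, unrr, if_neg (lt_asymm h), if_neg (lt_asymm h), if_pos h, if_pos h]
        have hble : b ≤ hV.toFinset.sup id := by
          rcases hab with h1 | h1
          · exact le_trans (le_of_lt h) (hVle a h1)
          · exact hVle b h1
        rw [hb b hble]
    show (e2.symm g).1 ∈ Wset Q V
    rw [mem_Wset_iff]
    intro a b hab
    have hf' := mem_Wset_iff.mp (hf : (e2.symm f).1 ∈ Wset Q V) a b hab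
    calc (e2.symm g).1.1 a b = unrr (fun p => (g p.1).1 p.2) a b := rfl
      _ = unrr (fun p => (f p.1).1 p.2) a b := (key a b hab).symm
      _ = Q.1 a b := hf'

/-- `AF^ℕ` with the weak topology and `LF^ℕ` with the subspace topology from the strong
topology are both homeomorphic to the Baire space `ℕ^ℕ` (product of discrete `ℕ`'s). -/
theorem homeomorphic_to_baire_space :
    Nonempty (@Homeomorph (AF ℕ) (ℕ → ℕ) (weakTop ℕ)
      (@Pi.topologicalSpace ℕ (fun _ => ℕ) (fun _ => ⊥))) ∧
    Nonempty (@Homeomorph {Q : AF ℕ // Q ∈ LFset ℕ} (ℕ → ℕ)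
      (TopologicalSpace.induced (Subtype.val : {Q : AF ℕ // Q ∈ LFset ℕ} → AF ℕ)
        (strongTop ℕ))
      (@Pi.topologicalSpace ℕ (fun _ => ℕ) (fun _ => ⊥))) := by
  constructor
  · exact ⟨@Homeomorph.trans (AF ℕ) (ℕ × ℕ → ℤ) (ℕ → ℕ) (weakTop ℕ)
      (@Pi.topologicalSpace (ℕ × ℕ) (fun _ => ℤ) (fun _ => ⊥))
      (@Pi.topologicalSpace ℕ (fun _ => ℕ) (fun _ => ⊥)) homeo1
      (piDiscreteCongr (Denumerable.eqv (ℕ × ℕ)) (Denumerable.eqv ℤ))⟩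
  · obtain ⟨τ⟩ : Nonempty (Cfin ≃ ℕ) := nonempty_equiv_of_countable
    exact ⟨@Homeomorph.trans LF (ℕ → Cfin) (ℕ → ℕ)
      (TopologicalSpace.induced (Subtype.val : LF → AF ℕ) (strongTop ℕ))
      (@Pi.topologicalSpace ℕ (fun _ => Cfin) (fun _ => ⊥))
      (@Pi.topologicalSpace ℕ (fun _ => ℕ) (fun _ => ⊥)) homeo2 (piDiscreteCongr (Equiv.refl ℕ) τ)⟩
end

section
/- The space AF^ℕ equipped with the strong topology is not separable: it has no countable dense subset. -/
open Classical in
noncomputable def fS (S : Set ℕ) : ℕ → ℤ :=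
  fun n => if ∃ m, n = m + 1 ∧ m ∈ S then 1 else 0

open Classical in
noncomputable def QS (S : Set ℕ) : AF ℕ :=
  ⟨fun a b => (if a = 0 then fS S b else 0) - (if b = 0 then fS S a else 0),
   by intro a b; ring⟩

open Classical in
lemma fS_succ (S : Set ℕ) (m : ℕ) : fS S (m + 1) = if m ∈ S then 1 else 0 := by
  unfold fS
  by_cases h : m ∈ S
  · rw [if_pos ⟨m, rfl, h⟩, if_pos h]
  · rw [if_neg, if_neg h]
    rintro ⟨k, hk, hkS⟩
    have hkm : k = m := by omega
    exact h (hkm ▸ hkS)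

open Classical in
lemma QS_val (S : Set ℕ) (m : ℕ) : (QS S).1 0 (m + 1) = if m ∈ S then 1 else 0 := by
  show (if (0:ℕ) = 0 then fS S (m+1) else 0) - (if m + 1 = 0 then fS S 0 else 0)
      = if m ∈ S then 1 else 0
  rw [if_pos rfl, if_neg (by omega), fS_succ]; ring

lemma Wset_inj {S T : Set ℕ} {Q' : AF ℕ}
    (hS : Q' ∈ Wset (QS S) {0}) (hT : Q' ∈ Wset (QS T) {0}) : S = T := by
  have h : overfillFun {0} (QS S).1 = overfillFun {0} (QS T).1 := by
    rw [← hS, ← hT]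
  ext m
  have := congrFun (congrFun h 0) (m + 1)
  unfold overfillFun at this
  have h01 : (0:ℕ) ∈ ({0} : Set ℕ) ∨ m + 1 ∈ ({0} : Set ℕ) := Or.inl rfl
  rw [if_pos h01, if_pos h01, QS_val, QS_val] at this
  by_cases h1 : m ∈ S <;> by_cases h2 : m ∈ T <;>
    simp [h1, h2] at this ⊢

/-- `AF^ℕ` with the strong topology has no countable dense subset. -/
theorem strong_not_separable :
    ¬ ∃ D : Set (AF ℕ), D.Countable ∧ @Dense _ (strongTop ℕ) D := by
  rintro ⟨D, hc, hd⟩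
  letI : TopologicalSpace (AF ℕ) := strongTop ℕ
  have hopen : ∀ S : Set ℕ, IsOpen (Wset (QS S) {0}) := fun S =>
    TopologicalSpace.isOpen_generateFrom_of_mem ⟨QS S, {0}, Set.finite_singleton 0, rfl⟩
  have hne : ∀ S : Set ℕ, (Wset (QS S) {0} ∩ D).Nonempty := fun S =>
    dense_iff_inter_open.mp hd (Wset (QS S) {0}) (hopen S) ⟨QS S, rfl⟩
  choose g hg hgD using hne
  have hinj : Function.Injective g := fun S T hST =>
    Wset_inj (hg S) (hST ▸ hg T)
  have hcnt : (Set.univ : Set (Set ℕ)).Countable := by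
    have hrange : (Set.range g).Countable := hc.mono (Set.range_subset_iff.mpr hgD)
    simpa using hrange.preimage hinj
  haveI : Countable (Set ℕ) := Set.countable_univ_iff.mp hcnt
  obtain ⟨f, hf⟩ := Countable.exists_injective_nat (Set ℕ)
  exact Function.cantor_injective _ hf
end

section
/- The space LF^ℕ of locally finite quivers on ℕ, equipped with the subspace topology inherited from the weak topology on AF^ℕ, is not a Polish space: it is not a second countable topological space whose topology is induced by a complete metric. -/
/-!
Baire category: `LF^ℕ` is the countable union over `N` of the sets of quivers in which vertex `0`
has no neighbour `y ≥ N`. Each of them is closed, since arrow multiplicities are locally constant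
for the weak topology, but has empty interior, since a basic neighbourhood only constrains
finitely many vertices and an arrow from `0` to a far vertex `y` can be added without leaving it.
A Polish space is a Baire space, so this is impossible.
-/

open Set Topology

attribute [local instance] weakTop

abbrev LFQuiver (X : Type*) : Type _ := {Q : AF X // Q ∈ LFset X}

section WeakTopology

variable {X : Type*}

lemma mem_Uset_self (Q : AF X) (V : Set X) : Q ∈ Uset Q V := rfl

lemma apply_eq_of_mem_Uset {Q Q' : AF X} {V : Set X} (h : Q' ∈ Uset Q V) {a b : X}
    (ha : a ∈ V) (hb : b ∈ V) : Q'.1 a b = Q.1 a b := by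
  simpa [restrictFun, ha, hb] using congrFun (congrFun h a) b

lemma Uset_anti (Q : AF X) {V W : Set X} (hVW : V ⊆ W) : Uset Q W ⊆ Uset Q V := by
  intro Q' hQ'
  funext a b
  simp only [restrictFun]
  split_ifs with h
  · exact apply_eq_of_mem_Uset hQ' (hVW h.1) (hVW h.2)
  · rfl

lemma isOpen_Uset (Q : AF X) {V : Set X} (hV : V.Finite) : IsOpen (Uset Q V) :=
  TopologicalSpace.GenerateOpen.basic _ ⟨Q, V, hV, rfl⟩

lemma exists_Uset_subset_of_isOpen {O : Set (AF X)} (hO : IsOpen O) :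
    ∀ Q ∈ O, ∃ V : Set X, V.Finite ∧ Uset Q V ⊆ O := by
  induction hO with
  | basic U hU =>
    obtain ⟨Q₀, V, hV, rfl⟩ := hU
    exact fun Q hQ => ⟨V, hV, fun _ hQ' => hQ'.trans hQ⟩
  | univ => exact fun Q _ => ⟨∅, finite_empty, subset_univ _⟩
  | inter U₁ U₂ _ _ ih₁ ih₂ =>
    intro Q hQ
    obtain ⟨V₁, hV₁, hs₁⟩ := ih₁ Q hQ.1
    obtain ⟨V₂, hV₂, hs₂⟩ := ih₂ Q hQ.2
    exact ⟨V₁ ∪ V₂, hV₁.union hV₂, fun Q' hQ' =>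
      ⟨hs₁ (Uset_anti Q subset_union_left hQ'), hs₂ (Uset_anti Q subset_union_right hQ')⟩⟩
  | sUnion S _ ih =>
    intro Q ⟨U, hU, hQU⟩
    obtain ⟨V, hV, hs⟩ := ih U hU Q hQU
    exact ⟨V, hV, fun Q' hQ' => ⟨U, hU, hs hQ'⟩⟩

lemma continuous_AF_apply (a b : X) : Continuous fun Q : AF X => Q.1 a b := by
  refine continuous_discrete_rng.mpr fun n => isOpen_iff_forall_mem_open.mpr fun Q hQ => ?_
  refine ⟨Uset Q {a, b}, fun Q' hQ' => ?_, isOpen_Uset Q (toFinite _), mem_Uset_self Q _⟩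
  have := apply_eq_of_mem_Uset hQ' (a := a) (b := b) (by simp) (by simp)
  simpa [this] using hQ

lemma LFQuiver.exists_Uset_subset_of_isOpen {s : Set (LFQuiver X)} (hs : IsOpen s)
    {Q : LFQuiver X} (hQ : Q ∈ s) :
    ∃ V : Set X, V.Finite ∧ ∀ Q' : LFQuiver X, Q'.1 ∈ Uset Q.1 V → Q' ∈ s := by
  obtain ⟨O, hO, rfl⟩ := isOpen_induced_iff.mp hs
  obtain ⟨V, hV, hsub⟩ := _root_.exists_Uset_subset_of_isOpen hO Q.1 hQ
  exact ⟨V, hV, fun Q' hQ' => hsub hQ'⟩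

instance : Nonempty (LFQuiver X) := ⟨⟨⟨fun _ _ => 0, by simp⟩, fun _ => by simp⟩⟩

end WeakTopology

section WithArrow

variable {X : Type*}

open Classical in
noncomputable def withArrow (Q : AF X) {a b : X} (hab : a ≠ b) : AF X :=
  ⟨fun v w => if v = a ∧ w = b then 1 else if v = b ∧ w = a then -1 else Q.1 v w, by
    intro v w
    have := Q.2 v w
    dsimp only
    split_ifs <;> grind⟩

lemma withArrow_apply_left_right (Q : AF X) {a b : X} (hab : a ≠ b) :
    (withArrow Q hab).1 a b = 1 := by
  simp [withArrow]

lemma withArrow_mem_Uset (Q : AF X) {a b : X} (hab : a ≠ b) {V : Set X} (hb : b ∉ V) :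
    withArrow Q hab ∈ Uset Q V := by
  funext v w
  simp only [restrictFun]
  split_ifs with h
  · have h₁ : ¬(v = a ∧ w = b) := fun h' => hb (h'.2 ▸ h.2)
    have h₂ : ¬(v = b ∧ w = a) := fun h' => hb (h'.1 ▸ h.1)
    simp [withArrow, h₁, h₂]
  · rfl

lemma withArrow_mem_LFset {Q : AF X} (hQ : Q ∈ LFset X) {a b : X} (hab : a ≠ b) :
    withArrow Q hab ∈ LFset X := by
  intro v
  refine ((hQ v).union (toFinite {a, b})).subset fun w hw => ?_
  by_cases h₁ : v = a ∧ w = b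
  · simp [h₁.2]
  by_cases h₂ : v = b ∧ w = a
  · simp [h₂.2]
  left
  simpa [withArrow, h₁, h₂] using hw

end WithArrow

def neighborsOfZeroLT (N : ℕ) : Set (LFQuiver ℕ) := {Q | ∀ y, N ≤ y → Q.1.1 0 y = 0}

lemma isClosed_neighborsOfZeroLT (N : ℕ) : IsClosed (neighborsOfZeroLT N) := by
  have : neighborsOfZeroLT N = ⋂ y ∈ Ici N, (fun Q : LFQuiver ℕ => Q.1.1 0 y) ⁻¹' {0} := by
    ext Q; simp [neighborsOfZeroLT]
  rw [this]
  refine isClosed_biInter fun y _ => isClosed_singleton.preimage ?_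
  exact (continuous_AF_apply 0 y).comp continuous_induced_dom

lemma iUnion_neighborsOfZeroLT : ⋃ N, neighborsOfZeroLT N = univ := by
  refine eq_univ_of_forall fun Q => mem_iUnion.mpr ?_
  obtain ⟨M, hM⟩ := (Q.2 0).bddAbove
  exact ⟨M + 1, fun y hy => by_contra fun hne => absurd (hM hne) (by omega)⟩

lemma interior_neighborsOfZeroLT (N : ℕ) : interior (neighborsOfZeroLT N) = ∅ := by
  refine eq_empty_of_forall_notMem fun Q hQ => ?_
  obtain ⟨V, hV, hsub⟩ := LFQuiver.exists_Uset_subset_of_isOpen isOpen_interior hQ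
  obtain ⟨M, hM⟩ := hV.bddAbove
  have hyV : max N M + 1 ∉ V := fun h => absurd (hM h) (by omega)
  have h0y : (0 : ℕ) ≠ max N M + 1 := by omega
  have hmem := interior_subset
    (hsub ⟨withArrow Q.1 h0y, withArrow_mem_LFset Q.2 h0y⟩ (withArrow_mem_Uset Q.1 h0y hyV))
  have := hmem (max N M + 1) (by omega)
  rw [withArrow_apply_left_right] at this
  exact one_ne_zero this

/-- `LF^ℕ` with the subspace topology inherited from the weak topology on `AF^ℕ`
is not a Polish space. -/
theorem lf_weak_not_polish :
    ¬ @PolishSpace {Q : AF ℕ // Q ∈ LFset ℕ}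
      (TopologicalSpace.induced (Subtype.val : {Q : AF ℕ // Q ∈ LFset ℕ} → AF ℕ)
        (weakTop ℕ)) := by
  intro _
  obtain ⟨N, hN⟩ :=
    nonempty_interior_of_iUnion_of_closed isClosed_neighborsOfZeroLT iUnion_neighborsOfZeroLT
  exact hN.ne_empty (interior_neighborsOfZeroLT N)
end

section
/- In the space AF (arrow finite quivers on ℕ with the weak topology), the set Fin of finite quivers is dense, has empty interior, is a countable union of closed sets (Fσ), and is not a countable intersection of open sets (not Gδ). The same four statements hold for Fin as a subset of the space LF (locally finite quivers on ℕ with the subspace topology from the strong topology). -/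
/-- The space `LF`: locally finite quivers on `ℕ` as a subtype of `AF ℕ`. -/
abbrev LFsub := {Q : AF ℕ // Q ∈ LFset ℕ}

/-- The topology on `LF`: subspace topology inherited from the strong topology. -/
def LFtop : TopologicalSpace LFsub :=
  TopologicalSpace.induced (Subtype.val : LFsub → AF ℕ) (strongTop ℕ)

/-! Both spaces are Polish. The weak topology is the product topology on the entries
`Q a b ∈ ℤ`; the strong topology on `LF` is the product topology on the rows, each row being a
finitely supported function carrying the discrete topology; and skew-symmetry cuts out a closed
subspace. The finite quivers are the union of the closed sets of quivers supported below `n`.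
Every basic neighbourhood of a quiver, being determined by finitely many vertices `V`, contains a
finite quiver (restrict or overfill on `V`) and an infinite one (add an infinite path beyond `V`).
So `Fin` is dense, has empty interior, and is meagre, and Baire's theorem forbids a dense meagre
Gδ set. -/

open Set TopologicalSpace Topology

lemma isTopologicalBasis_finite_fibers {α X β : Type*} (r : Set X → α → β)
    (hr : ∀ ⦃V V'⦄ ⦃a b : α⦄, V ⊆ V' → r V' a = r V' b → r V a = r V b) :
    @IsTopologicalBasis α
      (generateFrom {U | ∃ a V, V.Finite ∧ U = {b | r V b = r V a}})
      {U | ∃ a V, V.Finite ∧ U = {b | r V b = r V a}} := by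
  let _ : TopologicalSpace α := generateFrom {U | ∃ a V, V.Finite ∧ U = {b | r V b = r V a}}
  refine ⟨?_, sUnion_eq_univ_iff.2 fun a => ⟨_, ⟨a, ∅, finite_empty, rfl⟩, rfl⟩, rfl⟩
  rintro _ ⟨a₁, V₁, hV₁, rfl⟩ _ ⟨a₂, V₂, hV₂, rfl⟩ c ⟨hc₁, hc₂⟩
  refine ⟨_, ⟨c, V₁ ∪ V₂, hV₁.union hV₂, rfl⟩, rfl, fun b hb => ⟨?_, ?_⟩⟩
  · exact (hr subset_union_left hb).trans hc₁
  · exact (hr subset_union_right hb).trans hc₂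

lemma isMeagre_of_eq_iUnion_isClosed {Y : Type*} [TopologicalSpace Y] {s : Set Y}
    {F : ℕ → Set Y} (hF : ∀ n, IsClosed (F n)) (hs : s = ⋃ n, F n) (hint : interior s = ∅) :
    IsMeagre s := by
  subst hs
  refine isMeagre_iUnion fun n => ((hF n).isNowhereDense_iff.2 ?_).isMeagre
  exact subset_empty_iff.1 (hint ▸ interior_mono (subset_iUnion F n))

namespace AF

variable {X : Type*}

instance : Add (AF X) := ⟨fun P Q => ⟨P.1 + Q.1, fun a b => by simp [P.2 a b, Q.2 a b]; ring⟩⟩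

instance : Sub (AF X) := ⟨fun P Q => ⟨P.1 - Q.1, fun a b => by simp [P.2 a b, Q.2 a b]; ring⟩⟩

@[simp] lemma add_apply (P Q : AF X) (a b : X) : (P + Q).1 a b = P.1 a b + Q.1 a b := rfl

@[simp] lemma sub_apply (P Q : AF X) (a b : X) : (P - Q).1 a b = P.1 a b - Q.1 a b := rfl

lemma restrictFun_restrictFun_of_subset {V V' : Set X} (h : V ⊆ V') (f : X → X → ℤ) :
    restrictFun V (restrictFun V' f) = restrictFun V f := by
  funext a b
  by_cases hab : a ∈ V ∧ b ∈ V
  · simp [restrictFun, hab, h hab.1, h hab.2]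
  · simp [restrictFun, hab]

lemma overfillFun_overfillFun_of_subset {V V' : Set X} (h : V ⊆ V') (f : X → X → ℤ) :
    overfillFun V (overfillFun V' f) = overfillFun V f := by
  funext a b
  by_cases hab : a ∈ V ∨ b ∈ V
  · simp [overfillFun, hab, hab.imp (@h a) (@h b)]
  · simp [overfillFun, hab]

lemma mem_Uset_iff {Q P : AF X} {V : Set X} :
    P ∈ Uset Q V ↔ ∀ a ∈ V, ∀ b ∈ V, P.1 a b = Q.1 a b := by
  refine ⟨fun h a ha b hb => by simpa [restrictFun, ha, hb] using congrFun₂ h a b,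
    fun h => funext₂ fun a b => ?_⟩
  by_cases hab : a ∈ V ∧ b ∈ V
  · simp [restrictFun, hab, h a hab.1 b hab.2]
  · simp [restrictFun, hab]

lemma mem_Wset_iff {Q P : AF X} {V : Set X} :
    P ∈ Wset Q V ↔ ∀ a ∈ V, ∀ b, P.1 a b = Q.1 a b := by
  refine ⟨fun h a ha b => by simpa [overfillFun, ha] using congrFun₂ h a b,
    fun h => funext₂ fun a b => ?_⟩
  by_cases hab : a ∈ V ∨ b ∈ V
  · rcases hab with ha | hb
    · simp [overfillFun, ha, h a ha b]
    · simp [overfillFun, hb, P.2 a b, Q.2 a b, h b hb a]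
  · simp [overfillFun, hab]

lemma isTopologicalBasis_UBasis : @IsTopologicalBasis (AF X) (weakTop X) (UBasis X) :=
  isTopologicalBasis_finite_fibers (fun V (Q : AF X) => restrictFun V Q.1) fun V _ _ _ hV h => by
    simpa only [restrictFun_restrictFun_of_subset hV] using congrArg (restrictFun V) h

lemma isTopologicalBasis_WBasis : @IsTopologicalBasis (AF X) (strongTop X) (WBasis X) :=
  isTopologicalBasis_finite_fibers (fun V (Q : AF X) => overfillFun V Q.1) fun V _ _ _ hV h => by
    simpa only [overfillFun_overfillFun_of_subset hV] using congrArg (overfillFun V) h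

noncomputable def restrict (V : Set X) (Q : AF X) : AF X :=
  ⟨restrictFun V Q.1, fun a b => by by_cases ha : a ∈ V <;> by_cases hb : b ∈ V <;>
    simp [restrictFun, ha, hb, Q.2 a b]⟩

noncomputable def overfill (V : Set X) (Q : AF X) : AF X :=
  ⟨overfillFun V Q.1, fun a b => by by_cases ha : a ∈ V <;> by_cases hb : b ∈ V <;>
    simp [overfillFun, ha, hb, Q.2 a b]⟩

lemma restrict_mem_Uset (V : Set X) (Q : AF X) : restrict V Q ∈ Uset Q V :=
  restrictFun_restrictFun_of_subset subset_rfl Q.1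

lemma overfill_mem_Wset (V : Set X) (Q : AF X) : overfill V Q ∈ Wset Q V :=
  overfillFun_overfillFun_of_subset subset_rfl Q.1

lemma add_mem_Uset {Q P R : AF X} {V : Set X} (hP : P ∈ Uset Q V)
    (hR : ∀ a ∈ V, ∀ b ∈ V, R.1 a b = 0) : P + R ∈ Uset Q V := by
  rw [mem_Uset_iff] at hP ⊢
  intro a ha b hb
  simp [hP a ha b hb, hR a ha b hb]

lemma add_mem_Wset {Q P R : AF X} {V : Set X} (hP : P ∈ Wset Q V)
    (hR : ∀ a ∈ V, ∀ b, R.1 a b = 0) : P + R ∈ Wset Q V := by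
  rw [mem_Wset_iff] at hP ⊢
  intro a ha b
  simp [hP a ha b, hR a ha b]

lemma restrict_mem_FinSet {V : Set X} (hV : V.Finite) (Q : AF X) : restrict V Q ∈ FinSet X :=
  hV.subset fun a ⟨b, hb⟩ => by_contra fun ha => hb (by simp [restrict, restrictFun, ha])

lemma overfill_mem_FinSet {V : Set X} (hV : V.Finite) {Q : AF X} (hQ : Q ∈ LFset X) :
    overfill V Q ∈ FinSet X := by
  refine (hV.union (hV.biUnion fun b _ => hQ b)).subset fun a ⟨b, hb⟩ => ?_
  by_cases ha : a ∈ V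
  · exact Or.inl ha
  by_cases hbV : b ∈ V
  · exact Or.inr (mem_biUnion hbV fun h => hb (by simp [overfill, overfillFun, Q.2 a b, h]))
  · exact absurd (by simp [overfill, overfillFun, ha, hbV]) hb

lemma overfill_mem_LFset (V : Set X) {Q : AF X} (hQ : Q ∈ LFset X) : overfill V Q ∈ LFset X :=
  fun a => (hQ a).subset fun b hb h => hb (by simp [overfill, overfillFun, h])

lemma add_mem_LFset {P Q : AF X} (hP : P ∈ LFset X) (hQ : Q ∈ LFset X) : P + Q ∈ LFset X :=
  fun a => ((hP a).union (hQ a)).subset fun b hb => by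
    by_contra h
    simp only [mem_union, mem_ofPred_eq, not_or, not_not] at h
    simp [h.1, h.2] at hb

lemma sub_mem_FinSet {P Q : AF X} (hP : P ∈ FinSet X) (hQ : Q ∈ FinSet X) : P - Q ∈ FinSet X :=
  (hP.union hQ).subset fun a ⟨b, hb⟩ => by
    by_contra h
    simp only [mem_union, mem_ofPred_eq, not_or, not_exists, not_not] at h
    simp [h.1 b, h.2 b] at hb

lemma add_notMem_FinSet {P R : AF X} (hP : P ∈ FinSet X) (hR : R ∉ FinSet X) :
    P + R ∉ FinSet X := fun h =>
  hR (by convert sub_mem_FinSet h hP using 1; exact Subtype.ext (funext₂ fun a b => by simp))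

/-- The infinite path `N → N + 1 → N + 2 → ⋯`. -/
def ray (N : ℕ) : AF ℕ :=
  ⟨fun a b => if N ≤ a ∧ b = a + 1 then 1 else if N ≤ b ∧ a = b + 1 then -1 else 0,
    fun a b => by dsimp only; split_ifs <;> omega⟩

lemma ray_apply_of_lt {N a : ℕ} (h : a < N) (b : ℕ) : (ray N).1 a b = 0 := by
  simp only [ray]
  split_ifs <;> omega

lemma ray_mem_LFset (N : ℕ) : ray N ∈ LFset ℕ := fun a =>
  ((finite_singleton (a + 1)).union (finite_singleton (a - 1))).subset fun b hb => by
    simp only [ray, mem_ofPred_eq] at hb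
    split_ifs at hb <;> simp_all

lemma ray_notMem_FinSet (N : ℕ) : ray N ∉ FinSet ℕ := fun h =>
  (Ici_infinite N).mono (fun a (ha : N ≤ a) => show ∃ b, _ from ⟨a + 1, by simp [ray, ha]⟩) h

def supportedBelow (n : ℕ) : Set (AF ℕ) := {Q | ∀ a, n ≤ a → ∀ b, Q.1 a b = 0}

lemma supportedBelow_subset_FinSet (n : ℕ) : supportedBelow n ⊆ FinSet ℕ := fun _ hQ =>
  (finite_Iio n).subset fun a ⟨b, hb⟩ => by_contra fun ha => hb (hQ a (not_lt.1 ha) b)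

lemma FinSet_eq_iUnion_supportedBelow : FinSet ℕ = ⋃ n, supportedBelow n := by
  refine (iUnion_subset supportedBelow_subset_FinSet).antisymm' fun Q hQ => ?_
  obtain ⟨N, hN⟩ := hQ.bddAbove
  exact mem_iUnion.2 ⟨N + 1, fun a ha b => by_contra fun hb => by
    have : a ≤ N := hN ⟨b, hb⟩
    omega⟩

lemma isClosed_preimage_supportedBelow {Y : Type*} [TopologicalSpace Y] {f : Y → AF ℕ}
    (hf : ∀ a b, Continuous fun y => (f y).1 a b) (n : ℕ) :
    IsClosed (f ⁻¹' supportedBelow n) := by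
  have : f ⁻¹' supportedBelow n = ⋂ a ∈ Ici n, ⋂ b, {y | (f y).1 a b = 0} := by
    ext
    simp [supportedBelow]
  rw [this]
  exact isClosed_biInter fun a _ => isClosed_iInter fun b => isClosed_eq (hf a b) continuous_const

lemma exists_forall_lt_of_finite {V : Set ℕ} (hV : V.Finite) : ∃ N, ∀ a ∈ V, a < N := by
  obtain ⟨N, hN⟩ := hV.bddAbove
  exact ⟨N + 1, fun a ha => Nat.lt_succ_of_le (hN ha)⟩

section Weak

attribute [local instance] weakTop

variable {X : Type*}

def entries (Q : AF X) : X × X → ℤ := fun p => Q.1 p.1 p.2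

lemma continuous_entries : Continuous (entries : AF X → X × X → ℤ) := by
  refine continuous_pi fun p => continuous_discrete_rng.2 fun m => isOpen_iff_forall_mem_open.2
    fun Q hQ => ⟨Uset Q {p.1, p.2}, fun P hP => ?_, isOpen_generateFrom_of_mem
      ⟨Q, _, toFinite _, rfl⟩, rfl⟩
  rw [mem_Uset_iff] at hP
  simpa [entries, hP p.1 (by simp) p.2 (by simp)] using hQ

lemma weakTop_eq_induced_entries : weakTop X = induced entries inferInstance := by
  refine le_antisymm (continuous_iff_le_induced.1 continuous_entries) (le_generateFrom ?_)
  rintro _ ⟨Q, V, hV, rfl⟩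
  have : Uset Q V = entries ⁻¹' (V ×ˢ V).pi fun p => {entries Q p} := by
    ext P
    simp only [mem_Uset_iff, mem_preimage, mem_pi, mem_prod, mem_singleton_iff, entries]
    exact ⟨fun h p hp => h _ hp.1 _ hp.2, fun h a ha b hb => h (a, b) ⟨ha, hb⟩⟩
  rw [this]
  exact isOpen_induced (isOpen_set_pi (hV.prod hV) fun _ _ => isOpen_discrete _)

lemma isClosedEmbedding_entries : IsClosedEmbedding (entries : AF X → X × X → ℤ) := by
  refine ⟨⟨⟨weakTop_eq_induced_entries⟩, fun P Q h => Subtype.ext (funext₂ fun a b =>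
    congrFun h (a, b))⟩, ?_⟩
  have : range entries = ⋂ a, ⋂ b, {f : X × X → ℤ | f (a, b) = - f (b, a)} := by
    ext f
    simp only [mem_range, mem_iInter, mem_ofPred_eq]
    exact ⟨by rintro ⟨Q, rfl⟩; exact Q.2, fun h => ⟨⟨fun a b => f (a, b), h⟩, rfl⟩⟩
  rw [this]
  exact isClosed_iInter fun a => isClosed_iInter fun b =>
    isClosed_eq (continuous_apply _) (continuous_apply _).neg

instance [Countable X] : PolishSpace (AF X) := isClosedEmbedding_entries.polishSpace

lemma continuous_apply_weak (a b : X) : Continuous fun Q : AF X => Q.1 a b :=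
  (continuous_apply (a, b)).comp continuous_entries

lemma dense_FinSet_weak : Dense (FinSet X) := by
  refine isTopologicalBasis_UBasis.dense_iff.2 ?_
  rintro _ ⟨Q, V, hV, rfl⟩ ⟨P, hP⟩
  exact ⟨restrict V P, (restrict_mem_Uset V P).trans hP, restrict_mem_FinSet hV P⟩

lemma interior_FinSet_weak : interior (FinSet ℕ) = ∅ := by
  refine interior_eq_empty_iff_dense_compl.2 (isTopologicalBasis_UBasis.dense_iff.2 ?_)
  rintro _ ⟨Q, V, hV, rfl⟩ ⟨P, hP⟩
  obtain ⟨N, hN⟩ := exists_forall_lt_of_finite hV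
  refine ⟨restrict V P + ray N, add_mem_Uset ((restrict_mem_Uset V P).trans hP)
    fun a ha b _ => ray_apply_of_lt (hN a ha) b, ?_⟩
  exact add_notMem_FinSet (restrict_mem_FinSet hV P) (ray_notMem_FinSet N)

lemma isClosed_supportedBelow_weak (n : ℕ) : IsClosed (supportedBelow n) :=
  isClosed_preimage_supportedBelow (f := id) continuous_apply_weak n

lemma not_isGδ_FinSet_weak : ¬ IsGδ (FinSet ℕ) := fun h =>
  haveI : Nonempty (AF ℕ) := ⟨ray 0⟩
  not_isMeagre_of_isGδ_of_dense h dense_FinSet_weak <| isMeagre_of_eq_iUnion_isClosed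
    isClosed_supportedBelow_weak FinSet_eq_iUnion_supportedBelow interior_FinSet_weak

end Weak

section LF

attribute [local instance] LFtop

def rowTop : TopologicalSpace (ℕ →₀ ℤ) := ⊥

attribute [local instance] rowTop

lemma discreteTopology_rowTop : DiscreteTopology (ℕ →₀ ℤ) := ⟨rfl⟩

attribute [local instance] discreteTopology_rowTop

noncomputable def rows (Q : LFsub) (a : ℕ) : ℕ →₀ ℤ := Finsupp.ofSupportFinite (Q.1.1 a) (Q.2 a)

lemma rows_apply (Q : LFsub) (a b : ℕ) : rows Q a b = Q.1.1 a b := rfl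

lemma isOpen_preimage_Wset {Q : AF ℕ} {V : Set ℕ} (hV : V.Finite) :
    IsOpen (Subtype.val ⁻¹' Wset Q V : Set LFsub) :=
  ⟨Wset Q V, isOpen_generateFrom_of_mem ⟨Q, V, hV, rfl⟩, rfl⟩

lemma continuous_rows : Continuous rows := by
  refine continuous_pi fun a => continuous_discrete_rng.2 fun g => isOpen_iff_forall_mem_open.2
    fun Q hQ => ⟨_, fun P hP => ?_, isOpen_preimage_Wset (finite_singleton a), rfl⟩
  rw [mem_preimage, mem_Wset_iff] at hP
  refine hQ ▸ Finsupp.ext fun b => ?_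
  simp [rows_apply, hP a rfl b]

lemma LFtop_eq_induced_rows : LFtop = induced rows inferInstance := by
  refine le_antisymm (continuous_iff_le_induced.1 continuous_rows) ?_
  rw [LFtop, strongTop, induced_generateFrom_eq]
  refine le_generateFrom ?_
  rintro _ ⟨_, ⟨Q, V, hV, rfl⟩, rfl⟩
  have : Subtype.val ⁻¹' Wset Q V = rows ⁻¹' V.pi fun a => {g | ∀ b, g b = Q.1 a b} := by
    ext P
    simp [mem_Wset_iff, rows_apply]
  rw [this]
  exact isOpen_induced (isOpen_set_pi hV fun _ _ => isOpen_discrete _)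

lemma isClosedEmbedding_rows : IsClosedEmbedding rows := by
  refine ⟨⟨⟨LFtop_eq_induced_rows⟩, fun P Q h => Subtype.ext (Subtype.ext (funext₂ fun a b =>
    by rw [← rows_apply, ← rows_apply, h]))⟩, ?_⟩
  have : range rows = ⋂ a, ⋂ b, {f : ℕ → ℕ →₀ ℤ | f a b = - f b a} := by
    ext f
    simp only [mem_range, mem_iInter, mem_ofPred_eq]
    refine ⟨by rintro ⟨Q, rfl⟩; exact Q.1.2, fun h => ?_⟩
    exact ⟨⟨⟨fun a b => f a b, h⟩, fun a => (f a).hasFiniteSupport⟩,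
      funext fun a => Finsupp.ext fun b => rfl⟩
  rw [this]
  exact isClosed_iInter fun a => isClosed_iInter fun b => isClosed_eq
    ((continuous_of_discreteTopology (f := fun g : ℕ →₀ ℤ => g b)).comp (continuous_apply a))
    ((continuous_of_discreteTopology (f := fun g : ℕ →₀ ℤ => g a)).comp (continuous_apply b)).neg

instance : PolishSpace LFsub :=
  haveI : PolishSpace (ℕ →₀ ℤ) := inferInstance
  isClosedEmbedding_rows.polishSpace

lemma continuous_apply_LF (a b : ℕ) : Continuous fun Q : LFsub => Q.1.1 a b :=
  (continuous_of_discreteTopology (f := fun g : ℕ →₀ ℤ => g b)).comp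
    ((continuous_apply a).comp continuous_rows)

lemma isTopologicalBasis_LF :
    IsTopologicalBasis ((Subtype.val ⁻¹' ·) '' WBasis ℕ : Set (Set LFsub)) :=
  (isTopologicalBasis_WBasis (X := ℕ)).induced (s := strongTop ℕ) _

lemma dense_FinSet_LF : Dense {Q : LFsub | Q.1 ∈ FinSet ℕ} := by
  refine isTopologicalBasis_LF.dense_iff.2 ?_
  rintro _ ⟨_, ⟨Q, V, hV, rfl⟩, rfl⟩ ⟨P, hP⟩
  exact ⟨⟨overfill V P.1, overfill_mem_LFset V P.2⟩, (overfill_mem_Wset V P.1).trans hP,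
    overfill_mem_FinSet hV P.2⟩

lemma interior_FinSet_LF : interior {Q : LFsub | Q.1 ∈ FinSet ℕ} = ∅ := by
  refine interior_eq_empty_iff_dense_compl.2 (isTopologicalBasis_LF.dense_iff.2 ?_)
  rintro _ ⟨_, ⟨Q, V, hV, rfl⟩, rfl⟩ ⟨P, hP⟩
  obtain ⟨N, hN⟩ := exists_forall_lt_of_finite hV
  refine ⟨⟨overfill V P.1 + ray N, add_mem_LFset (overfill_mem_LFset V P.2) (ray_mem_LFset N)⟩,
    add_mem_Wset ((overfill_mem_Wset V P.1).trans hP) fun a ha b => ray_apply_of_lt (hN a ha) b,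
    ?_⟩
  exact add_notMem_FinSet (overfill_mem_FinSet hV P.2) (ray_notMem_FinSet N)

lemma isClosed_supportedBelow_LF (n : ℕ) : IsClosed {Q : LFsub | Q.1 ∈ supportedBelow n} :=
  isClosed_preimage_supportedBelow continuous_apply_LF n

lemma FinSet_LF_eq_iUnion :
    {Q : LFsub | Q.1 ∈ FinSet ℕ} = ⋃ n, {Q : LFsub | Q.1 ∈ supportedBelow n} := by
  simp [FinSet_eq_iUnion_supportedBelow, ofPred_exists]

lemma not_isGδ_FinSet_LF : ¬ IsGδ {Q : LFsub | Q.1 ∈ FinSet ℕ} := fun h =>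
  haveI : Nonempty LFsub := ⟨⟨ray 0, ray_mem_LFset 0⟩⟩
  not_isMeagre_of_isGδ_of_dense h dense_FinSet_LF <| isMeagre_of_eq_iUnion_isClosed
    isClosed_supportedBelow_LF FinSet_LF_eq_iUnion interior_FinSet_LF

end LF

end AF

/-- In `AF` (weak topology) the set of finite quivers is dense, has empty interior,
is Fσ, and is not Gδ; likewise in `LF` (subspace of the strong topology). -/
theorem finiteness_complexity :
    (@Dense _ (weakTop ℕ) (FinSet ℕ) ∧
     @interior _ (weakTop ℕ) (FinSet ℕ) = ∅ ∧
     (∃ F : ℕ → Set (AF ℕ), (∀ n, @IsClosed _ (weakTop ℕ) (F n)) ∧ FinSet ℕ = ⋃ n, F n) ∧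
     ¬ @IsGδ _ (weakTop ℕ) (FinSet ℕ)) ∧
    (@Dense _ LFtop {Q : LFsub | Q.1 ∈ FinSet ℕ} ∧
     @interior _ LFtop {Q : LFsub | Q.1 ∈ FinSet ℕ} = ∅ ∧
     (∃ F : ℕ → Set LFsub, (∀ n, @IsClosed _ LFtop (F n)) ∧
       {Q : LFsub | Q.1 ∈ FinSet ℕ} = ⋃ n, F n) ∧
     ¬ @IsGδ _ LFtop {Q : LFsub | Q.1 ∈ FinSet ℕ}) := by
  refine ⟨⟨AF.dense_FinSet_weak, AF.interior_FinSet_weak,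
    ⟨AF.supportedBelow, AF.isClosed_supportedBelow_weak, AF.FinSet_eq_iUnion_supportedBelow⟩,
    AF.not_isGδ_FinSet_weak⟩, ⟨AF.dense_FinSet_LF, AF.interior_FinSet_LF,
    ⟨_, AF.isClosed_supportedBelow_LF, AF.FinSet_LF_eq_iUnion⟩, AF.not_isGδ_FinSet_LF⟩⟩
end

section
/- Call a vertex x ∈ ℕ isolated in Q ∈ AF^ℕ if Q(x,y) = 0 for all y, and call Q connected if for all non-isolated vertices x, y there exist vertices v_0 = x, v_1, …, v_k = y with Q(v_j, v_{j+1}) ≠ 0 for all 0 ≤ j < k. Then the set of connected quivers is dense, has empty interior, and is a countable intersection of open sets (Gδ) in the space AF; and the set of connected locally finite quivers is not dense, has empty interior, and is Gδ in the space LF. -/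
/-- A quiver is connected if any two non-isolated vertices are joined by a path of arrows
(isolated meaning all arrow counts vanish). -/
def ConnQ (Q : AF ℕ) : Prop :=
  ∀ x y : ℕ, ¬ (∀ z, Q.1 x z = 0) → ¬ (∀ z, Q.1 y z = 0) →
    ∃ (k : ℕ) (v : ℕ → ℕ), v 0 = x ∧ v k = y ∧ ∀ j < k, Q.1 (v j) (v (j + 1)) ≠ 0

open Set Topology TopologicalSpace

section Aux

/-! ### generic open/basis helpers -/

lemma isOpen_gen {α : Type*} (g : Set (Set α)) {s : Set α}
    (h : ∀ x ∈ s, ∃ b ∈ g, x ∈ b ∧ b ⊆ s) :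
    IsOpen[generateFrom g] s := by
  letI := generateFrom g
  have hs : s = ⋃₀ {b | b ∈ g ∧ b ⊆ s} := by
    apply subset_antisymm
    · intro x hx
      obtain ⟨b, hbg, hxb, hbs⟩ := h x hx
      exact ⟨b, ⟨hbg, hbs⟩, hxb⟩
    · exact sUnion_subset fun b hb => hb.2
  rw [hs]
  exact isOpen_sUnion fun b hb => isOpen_generateFrom_of_mem hb.1

lemma restrict_mono {V V' : Set ℕ} (hVV : V ⊆ V') {f g : ℕ → ℕ → ℤ}
    (h : restrictFun V' f = restrictFun V' g) : restrictFun V f = restrictFun V g := by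
  funext a b
  by_cases hab : a ∈ V ∧ b ∈ V
  · have h2 := congrFun (congrFun h a) b
    simp only [restrictFun] at h2 ⊢
    rw [if_pos ⟨hVV hab.1, hVV hab.2⟩, if_pos ⟨hVV hab.1, hVV hab.2⟩] at h2
    rw [if_pos hab, if_pos hab]
    exact h2
  · simp only [restrictFun]
    rw [if_neg hab, if_neg hab]

lemma overfill_mono {V V' : Set ℕ} (hVV : V ⊆ V') {f g : ℕ → ℕ → ℤ}
    (h : overfillFun V' f = overfillFun V' g) : overfillFun V f = overfillFun V g := by
  funext a b
  by_cases hab : a ∈ V ∨ b ∈ V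
  · have h2 := congrFun (congrFun h a) b
    have hab' : a ∈ V' ∨ b ∈ V' := hab.imp (fun h => hVV h) (fun h => hVV h)
    simp only [overfillFun] at h2 ⊢
    rw [if_pos hab', if_pos hab'] at h2
    rw [if_pos hab, if_pos hab]
    exact h2
  · simp only [overfillFun]
    rw [if_neg hab, if_neg hab]

lemma ubasis_basis : @IsTopologicalBasis (AF ℕ) (weakTop ℕ) (UBasis ℕ) := by
  letI := weakTop ℕ
  refine ⟨?_, ?_, rfl⟩
  · rintro t₁ ⟨Q₁, V₁, hV₁, rfl⟩ t₂ ⟨Q₂, V₂, hV₂, rfl⟩ R ⟨h1, h2⟩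
    refine ⟨Uset R (V₁ ∪ V₂), ⟨R, V₁ ∪ V₂, hV₁.union hV₂, rfl⟩, rfl, ?_⟩
    intro Q' hQ'
    exact ⟨(restrict_mono subset_union_left hQ').trans h1,
      (restrict_mono subset_union_right hQ').trans h2⟩
  · apply Set.eq_univ_of_forall
    intro R
    exact ⟨Uset R ∅, ⟨R, ∅, finite_empty, rfl⟩, rfl⟩

lemma wbasis_basis : @IsTopologicalBasis (AF ℕ) (strongTop ℕ) (WBasis ℕ) := by
  letI := strongTop ℕ
  refine ⟨?_, ?_, rfl⟩
  · rintro t₁ ⟨Q₁, V₁, hV₁, rfl⟩ t₂ ⟨Q₂, V₂, hV₂, rfl⟩ R ⟨h1, h2⟩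
    refine ⟨Wset R (V₁ ∪ V₂), ⟨R, V₁ ∪ V₂, hV₁.union hV₂, rfl⟩, rfl, ?_⟩
    intro Q' hQ'
    exact ⟨(overfill_mono subset_union_left hQ').trans h1,
      (overfill_mono subset_union_right hQ').trans h2⟩
  · apply Set.eq_univ_of_forall
    intro R
    exact ⟨Wset R ∅, ⟨R, ∅, finite_empty, rfl⟩, rfl⟩

/-! ### edge quivers -/

def edgeF (u w : ℕ) : ℕ → ℕ → ℤ := fun a b =>
  if a = u ∧ b = w then 1 else if a = w ∧ b = u then -1 else 0

lemma edgeF_skew {u w : ℕ} (h : u ≠ w) (a b : ℕ) : edgeF u w a b = - edgeF u w b a := by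
  unfold edgeF; split_ifs <;> omega

lemma edgeF_support {u w a b : ℕ} (h : edgeF u w a b ≠ 0) :
    (a = u ∧ b = w) ∨ (a = w ∧ b = u) := by
  unfold edgeF at h; split_ifs at h <;> tauto

def discExt (f : ℕ → ℕ → ℤ) (M : ℕ) : ℕ → ℕ → ℤ :=
  fun a b => f a b + edgeF M (M+1) a b + edgeF (M+2) (M+3) a b

lemma discExt_skew (f : ℕ → ℕ → ℤ) (M : ℕ) (hf : ∀ a b, f a b = - f b a) :
    ∀ a b, discExt f M a b = - discExt f M b a := by
  intro a b
  unfold discExt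
  rw [hf a b, edgeF_skew (by omega : M ≠ M+1) a b, edgeF_skew (by omega : M+2 ≠ M+3) a b]
  ring

lemma discExt_nbrM (f : ℕ → ℕ → ℤ) (M : ℕ) (hfM : ∀ z, f M z = 0) :
    ∀ z, discExt f M M z ≠ 0 → z = M + 1 := by
  intro z h
  unfold discExt at h
  rw [hfM z] at h
  by_cases h1 : edgeF M (M+1) M z = 0
  · have h2 : edgeF (M+2) (M+3) M z ≠ 0 := by intro h2; rw [h1, h2] at h; omega
    have := edgeF_support h2; omega
  · have := edgeF_support h1; omega

lemma discExt_nbrM1 (f : ℕ → ℕ → ℤ) (M : ℕ) (hfM1 : ∀ z, f (M+1) z = 0) :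
    ∀ z, discExt f M (M+1) z ≠ 0 → z = M := by
  intro z h
  unfold discExt at h
  rw [hfM1 z] at h
  by_cases h1 : edgeF M (M+1) (M+1) z = 0
  · have h2 : edgeF (M+2) (M+3) (M+1) z ≠ 0 := by intro h2; rw [h1, h2] at h; omega
    have := edgeF_support h2; omega
  · have := edgeF_support h1; omega

lemma discExt_MM1 (f : ℕ → ℕ → ℤ) (M : ℕ) (h : f M (M+1) = 0) :
    discExt f M M (M+1) = 1 := by
  have e1 : edgeF M (M+1) M (M+1) = 1 := by unfold edgeF; split_ifs <;> omega
  have e2 : edgeF (M+2) (M+3) M (M+1) = 0 := by unfold edgeF; split_ifs <;> omega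
  unfold discExt; rw [h, e1, e2]; ring

lemma discExt_M2M3 (f : ℕ → ℕ → ℤ) (M : ℕ) (h : f (M+2) (M+3) = 0) :
    discExt f M (M+2) (M+3) = 1 := by
  have e1 : edgeF M (M+1) (M+2) (M+3) = 0 := by unfold edgeF; split_ifs <;> omega
  have e2 : edgeF (M+2) (M+3) (M+2) (M+3) = 1 := by unfold edgeF; split_ifs <;> omega
  unfold discExt; rw [h, e1, e2]; ring

lemma discExt_support (f : ℕ → ℕ → ℤ) (M x y : ℕ) (h : discExt f M x y ≠ 0) :
    f x y ≠ 0 ∨ y = M ∨ y = M+1 ∨ y = M+2 ∨ y = M+3 := by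
  unfold discExt at h
  by_cases h1 : edgeF M (M+1) x y = 0
  · by_cases h2 : edgeF (M+2) (M+3) x y = 0
    · left; intro h3; rw [h1, h2, h3] at h; omega
    · have := edgeF_support h2; omega
  · have := edgeF_support h1; omega

lemma discExt_lf (f : ℕ → ℕ → ℤ) (M : ℕ) (hf : ∀ x, {y | f x y ≠ 0}.Finite) :
    ∀ x, {y | discExt f M x y ≠ 0}.Finite := by
  intro x
  apply ((hf x).union (Set.toFinite {M, M+1, M+2, M+3})).subset
  intro y hy
  have := discExt_support f M x y hy
  simp only [mem_union, mem_setOf_eq, mem_insert_iff, mem_singleton_iff]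
  tauto

/-! ### disconnectedness -/

lemma reach_pair (Q : AF ℕ) (x y : ℕ)
    (hx : ∀ z, Q.1 x z ≠ 0 → z = y) (hy : ∀ z, Q.1 y z ≠ 0 → z = x)
    (k : ℕ) (v : ℕ → ℕ) (h0 : v 0 = x)
    (hs : ∀ j < k, Q.1 (v j) (v (j+1)) ≠ 0) :
    ∀ j, j ≤ k → v j = x ∨ v j = y := by
  intro j
  induction j with
  | zero => intro _; left; exact h0
  | succ n ih =>
    intro hn
    have hvn := ih (by omega)
    have hstep := hs n (by omega)
    rcases hvn with h' | h'
    · right; rw [h'] at hstep; exact hx _ hstep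
    · left; rw [h'] at hstep; exact hy _ hstep

lemma notConn (Q : AF ℕ) (x y c : ℕ)
    (hx : ∀ z, Q.1 x z ≠ 0 → z = y) (hy : ∀ z, Q.1 y z ≠ 0 → z = x)
    (hxy : Q.1 x y ≠ 0) (hc : ∃ z, Q.1 c z ≠ 0)
    (hcx : c ≠ x) (hcy : c ≠ y) : ¬ ConnQ Q := by
  intro h
  obtain ⟨k, v, h0, hk, hs⟩ := h x c (fun hall => hxy (hall y))
    (fun hall => hc.elim fun z hz => hz (hall z))
  rcases reach_pair Q x y hx hy k v h0 hs k le_rfl with h' | h'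
  · exact hcx (by rw [← hk, h'])
  · exact hcy (by rw [← hk, h'])

/-! ### connected extension (for density) -/

open Classical in
noncomputable def connExt (R : AF ℕ) (V : Set ℕ) (M : ℕ) : ℕ → ℕ → ℤ :=
  fun a b => if a ∈ V ∧ b ∈ V then R.1 a b
    else if b = M ∧ a ≠ M then 1 else if a = M ∧ b ≠ M then -1 else 0

lemma connExt_skew (R : AF ℕ) (V : Set ℕ) (M : ℕ) :
    ∀ a b, connExt R V M a b = - connExt R V M b a := by
  intro a b
  unfold connExt
  by_cases h1 : a ∈ V ∧ b ∈ V
  · rw [if_pos h1, if_pos ⟨h1.2, h1.1⟩]; exact R.2 a b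
  · rw [if_neg h1, if_neg (show ¬(b ∈ V ∧ a ∈ V) from fun h => h1 ⟨h.2, h.1⟩)]
    split_ifs <;> omega

lemma connExt_toM (R : AF ℕ) (V : Set ℕ) (M : ℕ) (hMV : M ∉ V) (a : ℕ) (ha : a ≠ M) :
    connExt R V M a M = 1 := by
  unfold connExt
  rw [if_neg (fun h => hMV h.2), if_pos ⟨rfl, ha⟩]

lemma connExt_fromM (R : AF ℕ) (V : Set ℕ) (M : ℕ) (hMV : M ∉ V) (b : ℕ) (hb : b ≠ M) :
    connExt R V M M b = -1 := by
  unfold connExt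
  rw [if_neg (fun h => hMV h.1), if_neg (fun h => hb h.1), if_pos ⟨rfl, hb⟩]

lemma connExt_conn (R : AF ℕ) (V : Set ℕ) (M : ℕ) (hMV : M ∉ V) :
    ConnQ ⟨connExt R V M, connExt_skew R V M⟩ := by
  intro x y _ _
  by_cases hx : x = M
  · by_cases hy : y = M
    · refine ⟨2, fun i => if i = 1 then M + 1 else M, by simp [hx], by simp [hy], ?_⟩
      intro j hj
      have : j = 0 ∨ j = 1 := by omega
      rcases this with rfl | rfl
      · show connExt R V M (if (0:ℕ) = 1 then M+1 else M) (if (1:ℕ) = 1 then M+1 else M) ≠ 0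
        norm_num
        rw [connExt_fromM R V M hMV (M+1) (by omega)]; omega
      · show connExt R V M (if (1:ℕ) = 1 then M+1 else M) (if (2:ℕ) = 1 then M+1 else M) ≠ 0
        norm_num
        rw [connExt_toM R V M hMV (M+1) (by omega)]; omega
    · refine ⟨1, fun i => if i = 0 then x else y, by simp, by simp, ?_⟩
      intro j hj
      have : j = 0 := by omega
      subst this
      show connExt R V M (if (0:ℕ) = 0 then x else y) (if (1:ℕ) = 0 then x else y) ≠ 0
      norm_num
      rw [hx, connExt_fromM R V M hMV y hy]; omega
  · by_cases hy : y = M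
    · refine ⟨1, fun i => if i = 0 then x else y, by simp, by simp, ?_⟩
      intro j hj
      have : j = 0 := by omega
      subst this
      show connExt R V M (if (0:ℕ) = 0 then x else y) (if (1:ℕ) = 0 then x else y) ≠ 0
      norm_num
      rw [hy, connExt_toM R V M hMV x hx]; omega
    · refine ⟨2, fun i => if i = 0 then x else if i = 1 then M else y, by simp, by simp, ?_⟩
      intro j hj
      have : j = 0 ∨ j = 1 := by omega
      rcases this with rfl | rfl
      · show connExt R V M (if (0:ℕ) = 0 then x else if (0:ℕ) = 1 then M else y)
          (if (1:ℕ) = 0 then x else if (1:ℕ) = 1 then M else y) ≠ 0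
        norm_num
        rw [connExt_toM R V M hMV x hx]; omega
      · show connExt R V M (if (1:ℕ) = 0 then x else if (1:ℕ) = 1 then M else y)
          (if (2:ℕ) = 0 then x else if (2:ℕ) = 1 then M else y) ≠ 0
        norm_num
        rw [connExt_fromM R V M hMV y hy]; omega

end Aux

section GDelta

open Set TopologicalSpace

def nzSet (a b : ℕ) : Set (AF ℕ) := {Q | Q.1 a b ≠ 0}

def pathSet (x y : ℕ) : Set (AF ℕ) :=
  {Q | ∃ (k : ℕ) (v : ℕ → ℕ), v 0 = x ∧ v k = y ∧ ∀ j < k, Q.1 (v j) (v (j+1)) ≠ 0}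

lemma pathSet_eq (x y : ℕ) : pathSet x y =
    ⋃ (k : ℕ), ⋃ (v : ℕ → ℕ), ⋃ (_ : v 0 = x ∧ v k = y),
      ⋂ j ∈ Finset.range k, nzSet (v j) (v (j+1)) := by
  ext Q
  simp only [pathSet, nzSet, mem_iUnion, mem_iInter, Finset.mem_range, mem_setOf_eq]
  constructor
  · rintro ⟨k, v, h0, hk, hs⟩; exact ⟨k, v, ⟨h0, hk⟩, hs⟩
  · rintro ⟨k, v, ⟨h0, hk⟩, hs⟩; exact ⟨k, v, h0, hk, hs⟩

lemma coord_open_weak (a b : ℕ) (c : ℤ) :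
    IsOpen[weakTop ℕ] {Q : AF ℕ | Q.1 a b = c} := by
  apply isOpen_gen
  intro R hR
  refine ⟨Uset R {a, b}, ⟨R, {a, b}, (Set.finite_singleton b).insert a, rfl⟩, rfl, ?_⟩
  intro Q' hQ'
  have h := congrFun (congrFun hQ' a) b
  simp only [restrictFun] at h
  rw [if_pos ⟨mem_insert a {b}, mem_insert_of_mem a rfl⟩,
    if_pos ⟨mem_insert a {b}, mem_insert_of_mem a rfl⟩] at h
  exact h.trans hR

lemma coord_open_strong (a b : ℕ) (c : ℤ) :
    IsOpen[strongTop ℕ] {Q : AF ℕ | Q.1 a b = c} := by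
  apply isOpen_gen
  intro R hR
  refine ⟨Wset R {a, b}, ⟨R, {a, b}, (Set.finite_singleton b).insert a, rfl⟩, rfl, ?_⟩
  intro Q' hQ'
  have h := congrFun (congrFun hQ' a) b
  simp only [overfillFun] at h
  rw [if_pos (Or.inl (mem_insert a {b})), if_pos (Or.inl (mem_insert a {b}))] at h
  exact h.trans hR

lemma connSet_eq : {Q : AF ℕ | ConnQ Q} =
    ⋂ (x : ℕ), ⋂ (y : ℕ),
      ((⋂ z : ℕ, {Q : AF ℕ | Q.1 x z = 0}) ∪
       ((⋂ z : ℕ, {Q : AF ℕ | Q.1 y z = 0}) ∪ pathSet x y)) := by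
  ext Q
  simp only [mem_setOf_eq, mem_iInter, mem_union, ConnQ, pathSet]
  constructor
  · intro h x y
    by_cases hx : ∀ z, Q.1 x z = 0
    · exact Or.inl hx
    by_cases hy : ∀ z, Q.1 y z = 0
    · exact Or.inr (Or.inl hy)
    exact Or.inr (Or.inr (h x y hx hy))
  · intro h x y hx hy
    rcases h x y with h' | h' | h'
    · exact absurd h' hx
    · exact absurd h' hy
    · exact h'

lemma conn_gdelta (t : TopologicalSpace (AF ℕ))
    (hcoord : ∀ a b (c : ℤ), IsOpen[t] {Q : AF ℕ | Q.1 a b = c}) :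
    @IsGδ _ t {Q : AF ℕ | ConnQ Q} := by
  letI := t
  have hnz : ∀ a b : ℕ, IsOpen (nzSet a b) := by
    intro a b
    have : nzSet a b = ⋃ c : {c : ℤ // c ≠ 0}, {Q : AF ℕ | Q.1 a b = c.1} := by
      ext Q
      simp only [nzSet, mem_iUnion, mem_setOf_eq]
      exact ⟨fun h => ⟨⟨Q.1 a b, h⟩, rfl⟩, fun ⟨c, hc⟩ => hc ▸ c.2⟩
    rw [this]
    exact isOpen_iUnion fun c => hcoord a b c.1
  have hpath : ∀ x y : ℕ, IsOpen (pathSet x y) := by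
    intro x y
    rw [pathSet_eq]
    exact isOpen_iUnion fun k => isOpen_iUnion fun v => isOpen_iUnion fun _ =>
      isOpen_biInter_finset fun j _ => hnz _ _
  rw [connSet_eq]
  refine IsGδ.iInter fun x => IsGδ.iInter fun y => ?_
  refine IsGδ.union ?_ (IsGδ.union ?_ (hpath x y).isGδ)
  · exact IsGδ.iInter fun z => (hcoord x z 0).isGδ
  · exact IsGδ.iInter fun z => (hcoord y z 0).isGδ

end GDelta

section Main

open Set TopologicalSpace

lemma restrict_skew (Q : AF ℕ) (V : Set ℕ) :
    ∀ a b, restrictFun V Q.1 a b = - restrictFun V Q.1 b a := by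
  intro a b
  simp only [restrictFun]
  by_cases h : a ∈ V ∧ b ∈ V
  · rw [if_pos h, if_pos ⟨h.2, h.1⟩]; exact Q.2 a b
  · rw [if_neg h, if_neg (fun h' => h ⟨h'.2, h'.1⟩)]; ring

lemma overfill_skew (Q : AF ℕ) (V : Set ℕ) :
    ∀ a b, overfillFun V Q.1 a b = - overfillFun V Q.1 b a := by
  intro a b
  simp only [overfillFun]
  by_cases h : a ∈ V ∨ b ∈ V
  · rw [if_pos h, if_pos h.symm]; exact Q.2 a b
  · rw [if_neg h, if_neg (fun h' => h h'.symm)]; ring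

lemma restrict_discExt (Q : AF ℕ) (V : Set ℕ) (M : ℕ) (hVlt : ∀ x ∈ V, x < M) :
    restrictFun V (discExt (restrictFun V Q.1) M) = restrictFun V Q.1 := by
  funext a b
  by_cases h : a ∈ V ∧ b ∈ V
  · have ha := hVlt a h.1
    have hb := hVlt b h.2
    have e1 : edgeF M (M+1) a b = 0 := by unfold edgeF; split_ifs <;> omega
    have e2 : edgeF (M+2) (M+3) a b = 0 := by unfold edgeF; split_ifs <;> omega
    simp only [restrictFun, discExt, if_pos h]
    rw [e1, e2]; ring
  · simp only [restrictFun, if_neg h]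

lemma overfill_discExt (Q : AF ℕ) (V : Set ℕ) (M : ℕ) (hVlt : ∀ x ∈ V, x < M) :
    overfillFun V (discExt (overfillFun V Q.1) M) = overfillFun V Q.1 := by
  funext a b
  by_cases h : a ∈ V ∨ b ∈ V
  · have e1 : edgeF M (M+1) a b = 0 := by
      by_contra he
      rcases edgeF_support he with ⟨rfl, rfl⟩ | ⟨rfl, rfl⟩ <;>
        rcases h with h | h <;> (have := hVlt _ h; omega)
    have e2 : edgeF (M+2) (M+3) a b = 0 := by
      by_contra he
      rcases edgeF_support he with ⟨rfl, rfl⟩ | ⟨rfl, rfl⟩ <;>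
        rcases h with h | h <;> (have := hVlt _ h; omega)
    simp only [overfillFun, discExt, if_pos h]
    rw [e1, e2]; ring
  · simp only [overfillFun, if_neg h]

/-- Density of connected quivers in the weak topology. -/
lemma dense_weak : @Dense _ (weakTop ℕ) {Q : AF ℕ | ConnQ Q} := by
  letI := weakTop ℕ
  rw [ubasis_basis.dense_iff]
  rintro o ⟨Q, V, hV, rfl⟩ ⟨R, hR⟩
  obtain ⟨bnd, hbnd⟩ := hV.bddAbove
  set M := bnd + 1 with hM
  have hMV : M ∉ V := fun h => by have := hbnd h; omega
  refine ⟨⟨connExt R V M, connExt_skew R V M⟩, ?_, connExt_conn R V M hMV⟩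
  show restrictFun V (connExt R V M) = restrictFun V Q.1
  refine Eq.trans ?_ hR
  funext a b
  simp only [restrictFun]
  split_ifs with h
  · unfold connExt; rw [if_pos h]
  · rfl

/-- Empty interior in the weak topology. -/
lemma int_weak : @interior _ (weakTop ℕ) {Q : AF ℕ | ConnQ Q} = ∅ := by
  letI := weakTop ℕ
  rw [eq_empty_iff_forall_notMem]
  intro Q hQ
  have hnh : {Q : AF ℕ | ConnQ Q} ∈ nhds Q := mem_interior_iff_mem_nhds.mp hQ
  obtain ⟨o, ⟨R, V, hV, rfl⟩, hQo, hos⟩ := ubasis_basis.mem_nhds_iff.mp hnh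
  obtain ⟨bnd, hbnd⟩ := hV.bddAbove
  set M := bnd + 1 with hM
  have hVlt : ∀ x ∈ V, x < M := fun x hx => by have := hbnd hx; omega
  set f := restrictFun V Q.1 with hf
  have hfM : ∀ z, f M z = 0 := by
    intro z; rw [hf]; simp only [restrictFun]
    rw [if_neg]; rintro ⟨h, -⟩; have := hVlt M h; omega
  have hfM1 : ∀ z, f (M+1) z = 0 := by
    intro z; rw [hf]; simp only [restrictFun]
    rw [if_neg]; rintro ⟨h, -⟩; have := hVlt (M+1) h; omega
  have hf2 : f (M+2) (M+3) = 0 := by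
    rw [hf]; simp only [restrictFun]
    rw [if_neg]; rintro ⟨h, -⟩; have := hVlt (M+2) h; omega
  have hfskew : ∀ a b, f a b = - f b a := restrict_skew Q V
  have hmem : (⟨discExt f M, discExt_skew f M hfskew⟩ : AF ℕ) ∈ Uset R V := by
    show restrictFun V (discExt f M) = restrictFun V R.1
    exact (restrict_discExt Q V M hVlt).trans hQo
  refine notConn _ M (M+1) (M+2) (discExt_nbrM f M hfM) (discExt_nbrM1 f M hfM1)
    ?_ ⟨M+3, ?_⟩ (by omega) (by omega) (hos hmem)
  · show discExt f M M (M+1) ≠ 0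
    rw [discExt_MM1 f M (hfM (M+1))]; omega
  · show discExt f M (M+2) (M+3) ≠ 0
    rw [discExt_M2M3 f M hf2]; omega

/-- Gδ in the weak topology. -/
lemma gdelta_weak : @IsGδ _ (weakTop ℕ) {Q : AF ℕ | ConnQ Q} :=
  conn_gdelta (weakTop ℕ) coord_open_weak

lemma gdelta_strong : @IsGδ _ (strongTop ℕ) {Q : AF ℕ | ConnQ Q} :=
  conn_gdelta (strongTop ℕ) coord_open_strong

/-- Gδ in LF. -/
lemma gdelta_LF : @IsGδ _ LFtop {Q : LFsub | ConnQ Q.1} := by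
  letI : TopologicalSpace (AF ℕ) := strongTop ℕ
  letI := LFtop
  obtain ⟨T, hTo, hTc, hTe⟩ := gdelta_strong
  refine ⟨(fun t => (Subtype.val : LFsub → AF ℕ) ⁻¹' t) '' T, ?_, hTc.image _, ?_⟩
  · rintro t ⟨u, hu, rfl⟩
    exact isOpen_induced_iff.mpr ⟨u, hTo u hu, rfl⟩
  · have : {Q : LFsub | ConnQ Q.1} = (Subtype.val : LFsub → AF ℕ) ⁻¹' {Q : AF ℕ | ConnQ Q} := rfl
    rw [this, hTe, sInter_image, preimage_sInter]

/-- Not dense in LF. -/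
lemma not_dense_LF : ¬ @Dense _ LFtop {Q : LFsub | ConnQ Q.1} := by
  letI : TopologicalSpace (AF ℕ) := strongTop ℕ
  letI := LFtop
  intro hd
  set z : ℕ → ℕ → ℤ := fun _ _ => 0 with hz
  have hzskew : ∀ a b, z a b = - z b a := fun a b => by simp [hz]
  set Q₀ : AF ℕ := ⟨discExt z 0, discExt_skew z 0 hzskew⟩ with hQ₀
  have hQ₀lf : Q₀ ∈ LFset ℕ :=
    discExt_lf z 0 (fun x => (finite_empty (α := ℕ)).subset (by simp [hz]))
  set V : Set ℕ := {0, 1, 2, 3} with hV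
  have hWopen : IsOpen ((Subtype.val : LFsub → AF ℕ) ⁻¹' Wset Q₀ V) := by
    refine isOpen_induced_iff.mpr ⟨Wset Q₀ V, ?_, rfl⟩
    exact isOpen_generateFrom_of_mem ⟨Q₀, V, Set.toFinite V, rfl⟩
  obtain ⟨Q', hQ'⟩ := dense_iff_inter_open.mp hd _ hWopen ⟨⟨Q₀, hQ₀lf⟩, rfl⟩
  have hag : ∀ a b : ℕ, a ∈ V ∨ b ∈ V → Q'.1.1 a b = Q₀.1 a b := by
    intro a b hab
    have h := congrFun (congrFun hQ'.1 a) b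
    simp only [overfillFun] at h
    rw [if_pos hab, if_pos hab] at h
    exact h
  have h0V : (0 : ℕ) ∈ V := by simp [hV]
  have h1V : (1 : ℕ) ∈ V := by simp [hV]
  have h2V : (2 : ℕ) ∈ V := by simp [hV]
  have hzz : ∀ w, z 0 w = 0 := fun _ => rfl
  have hzz1 : ∀ w, z 1 w = 0 := fun _ => rfl
  refine notConn Q'.1 0 1 2 ?_ ?_ ?_ ⟨3, ?_⟩ (by omega) (by omega) hQ'.2
  · intro w hw
    rw [hag 0 w (Or.inl h0V)] at hw
    exact discExt_nbrM z 0 hzz w hw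
  · intro w hw
    rw [hag 1 w (Or.inl h1V)] at hw
    exact discExt_nbrM1 z 0 hzz1 w hw
  · rw [hag 0 1 (Or.inl h0V)]
    show discExt z 0 0 1 ≠ 0
    rw [discExt_MM1 z 0 (hzz 1)]; omega
  · rw [hag 2 3 (Or.inl h2V)]
    show discExt z 0 2 3 ≠ 0
    rw [discExt_M2M3 z 0 rfl]; omega

/-- Empty interior in LF. -/
lemma int_LF : @interior _ LFtop {Q : LFsub | ConnQ Q.1} = ∅ := by
  letI : TopologicalSpace (AF ℕ) := strongTop ℕ
  letI : TopologicalSpace LFsub := LFtop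
  rw [eq_empty_iff_forall_notMem]
  rintro ⟨Q, hQ⟩ hmem
  have hnh : {Q : LFsub | ConnQ Q.1} ∈ @nhds _ LFtop ⟨Q, hQ⟩ :=
    mem_interior_iff_mem_nhds.mp hmem
  have heq : @nhds LFsub LFtop ⟨Q, hQ⟩ =
      Filter.comap (Subtype.val : LFsub → AF ℕ) (nhds Q) :=
    nhds_induced (Subtype.val : LFsub → AF ℕ) ⟨Q, hQ⟩
  obtain ⟨t, ht, hsub⟩ := Filter.mem_comap.mp (heq ▸ hnh)
  obtain ⟨w, ⟨R, V, hV, rfl⟩, hQw, hwt⟩ := wbasis_basis.mem_nhds_iff.mp ht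
  set S : Set ℕ := V ∪ ⋃ x ∈ V, {y | Q.1 x y ≠ 0} with hS
  have hSfin : S.Finite := hV.union (hV.biUnion fun x _ => hQ x)
  obtain ⟨bnd, hbnd⟩ := hSfin.bddAbove
  set M := bnd + 1 with hM
  have hVlt : ∀ x ∈ V, x < M := fun x hx => by
    have := hbnd (mem_union_left _ hx); omega
  have hnbr : ∀ x ∈ V, ∀ w, M ≤ w → Q.1 x w = 0 := by
    intro x hx w hw
    by_contra h
    have : w ∈ S := mem_union_right _ (mem_biUnion hx h)
    have := hbnd this; omega
  set f := overfillFun V Q.1 with hf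
  have hfM : ∀ z, f M z = 0 := by
    intro z; rw [hf]; simp only [overfillFun]
    split_ifs with h
    · rcases h with h | h
      · have := hVlt M h; omega
      · rw [Q.2 M z, hnbr z h M le_rfl]; ring
    · rfl
  have hfM1 : ∀ z, f (M+1) z = 0 := by
    intro z; rw [hf]; simp only [overfillFun]
    split_ifs with h
    · rcases h with h | h
      · have := hVlt (M+1) h; omega
      · rw [Q.2 (M+1) z, hnbr z h (M+1) (by omega)]; ring
    · rfl
  have hf2 : f (M+2) (M+3) = 0 := by
    rw [hf]; simp only [overfillFun]
    rw [if_neg]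
    rintro (h | h) <;> (have := hVlt _ h; omega)
  have hfskew : ∀ a b, f a b = - f b a := overfill_skew Q V
  have hglf : (⟨discExt f M, discExt_skew f M hfskew⟩ : AF ℕ) ∈ LFset ℕ := by
    apply discExt_lf
    intro x
    apply (hQ x).subset
    intro y hy
    simp only [hf, overfillFun, mem_setOf_eq] at hy ⊢
    by_cases h : x ∈ V ∨ y ∈ V
    · rw [if_pos h] at hy; exact hy
    · rw [if_neg h] at hy; exact absurd rfl hy
  have hmem2 : (⟨discExt f M, discExt_skew f M hfskew⟩ : AF ℕ) ∈ Wset R V := by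
    show overfillFun V (discExt f M) = overfillFun V R.1
    exact (overfill_discExt Q V M hVlt).trans hQw
  have hconn : ConnQ (⟨discExt f M, discExt_skew f M hfskew⟩ : AF ℕ) :=
    hsub (show (⟨⟨discExt f M, discExt_skew f M hfskew⟩, hglf⟩ : LFsub) ∈ _ from hwt hmem2)
  refine notConn _ M (M+1) (M+2) (discExt_nbrM f M hfM) (discExt_nbrM1 f M hfM1)
    ?_ ⟨M+3, ?_⟩ (by omega) (by omega) hconn
  · show discExt f M M (M+1) ≠ 0
    rw [discExt_MM1 f M (hfM (M+1))]; omega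
  · show discExt f M (M+2) (M+3) ≠ 0
    rw [discExt_M2M3 f M hf2]; omega

end Main

/-- Connected quivers are dense, have empty interior, and are Gδ in `AF`;
connected locally finite quivers are not dense, have empty interior, and are Gδ in `LF`. -/
theorem connectedness_complexity :
    (@Dense _ (weakTop ℕ) {Q : AF ℕ | ConnQ Q} ∧
     @interior _ (weakTop ℕ) {Q : AF ℕ | ConnQ Q} = ∅ ∧
     @IsGδ _ (weakTop ℕ) {Q : AF ℕ | ConnQ Q}) ∧
    (¬ @Dense _ LFtop {Q : LFsub | ConnQ Q.1} ∧
     @interior _ LFtop {Q : LFsub | ConnQ Q.1} = ∅ ∧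
     @IsGδ _ LFtop {Q : LFsub | ConnQ Q.1}) := by
  exact ⟨⟨dense_weak, int_weak, gdelta_weak⟩, ⟨not_dense_LF, int_LF, gdelta_LF⟩⟩
end

section
/- Call Q ∈ AF^ℕ acyclic if there is no finite sequence of vertices v_1, …, v_ℓ (ℓ ≥ 1) with Q(v_j, v_{j+1}) > 0 for all j = 1, …, ℓ, indices taken modulo ℓ. Then the set of acyclic quivers is closed, not dense, and has empty interior in the space AF; and the set of acyclic locally finite quivers is closed, not dense, and has empty interior in the space LF. -/
/-- A quiver is acyclic if it has no finite oriented cycle `v_0 → v_1 → ⋯ → v_{ℓ-1} → v_0`. -/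
def AcyclicQ {X : Type*} (Q : AF X) : Prop :=
  ¬ ∃ (ℓ : ℕ) (v : ℕ → X), 1 ≤ ℓ ∧ ∀ j < ℓ, 0 < Q.1 (v j) (v ((j + 1) % ℓ))


def patchF (Q : ℕ → ℕ → ℤ) (n : ℕ) : ℕ → ℕ → ℤ := fun v w =>
  if (v = n ∨ v = n+1 ∨ v = n+2) ∧ (w = n ∨ w = n+1 ∨ w = n+2) then
    (if v = n ∧ w = n+1 ∨ v = n+1 ∧ w = n+2 ∨ v = n+2 ∧ w = n then 1
     else if w = n ∧ v = n+1 ∨ w = n+1 ∧ v = n+2 ∨ w = n+2 ∧ v = n then -1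
     else 0)
  else Q v w

noncomputable def patchAF (Q : AF ℕ) (n : ℕ) : AF ℕ :=
  ⟨patchF Q.1 n, by
    intro a b
    have h := Q.2 a b
    by_cases hc : (a = n ∨ a = n+1 ∨ a = n+2) ∧ (b = n ∨ b = n+1 ∨ b = n+2)
    · have hc' : (b = n ∨ b = n+1 ∨ b = n+2) ∧ (a = n ∨ a = n+1 ∨ a = n+2) := ⟨hc.2, hc.1⟩
      simp only [patchF, if_pos hc, if_pos hc']
      split_ifs <;> omega
    · have hc' : ¬((b = n ∨ b = n+1 ∨ b = n+2) ∧ (a = n ∨ a = n+1 ∨ a = n+2)) :=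
        fun h' => hc ⟨h'.2, h'.1⟩
      simp only [patchF, if_neg hc, if_neg hc']
      exact h⟩

lemma patchF_eq_of_lt {Q : ℕ → ℕ → ℤ} {n v w : ℕ} (h : v < n ∨ w < n) :
    patchF Q n v w = Q v w := by
  unfold patchF; rw [if_neg]; omega

lemma patch_cycle_spec (Q : AF ℕ) (n : ℕ) :
    ∀ j < 3, 0 < (patchAF Q n).1 ((fun j => n + j % 3) j) ((fun j => n + j % 3) ((j+1) % 3)) := by
  intro j hj
  interval_cases j <;> norm_num [patchAF, patchF]

lemma restrict_patch {V : Set ℕ} {n : ℕ} (hV : ∀ x ∈ V, x < n) (Q : ℕ → ℕ → ℤ) :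
    restrictFun V (patchF Q n) = restrictFun V Q := by
  funext a b
  unfold restrictFun
  split_ifs with h
  · exact patchF_eq_of_lt (Or.inl (hV a h.1))
  · rfl

lemma overfill_patch {V : Set ℕ} {n : ℕ} (hV : ∀ x ∈ V, x < n) (Q : ℕ → ℕ → ℤ) :
    overfillFun V (patchF Q n) = overfillFun V Q := by
  funext a b
  unfold overfillFun
  split_ifs with h
  · exact patchF_eq_of_lt (h.imp (hV a) (hV b))
  · rfl

lemma restrict_eq_at {V : Set ℕ} {Q Q' : ℕ → ℕ → ℤ}
    (h : restrictFun V Q' = restrictFun V Q) {a b : ℕ} (ha : a ∈ V) (hb : b ∈ V) :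
    Q' a b = Q a b := by
  have := congrFun (congrFun h a) b
  simpa [restrictFun, ha, hb] using this

lemma overfill_eq_at' {V : Set ℕ} {Q Q' : ℕ → ℕ → ℤ}
    (h : overfillFun V Q' = overfillFun V Q) {a b : ℕ} (hab : a ∈ V ∨ b ∈ V) :
    Q' a b = Q a b := by
  have h2 := congrFun (congrFun h a) b
  simp only [overfillFun] at h2
  rwa [if_pos hab, if_pos hab] at h2

lemma overfill_eq_at {V : Set ℕ} {Q Q' : ℕ → ℕ → ℤ}
    (h : overfillFun V Q' = overfillFun V Q) {a b : ℕ} (ha : a ∈ V) :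
    Q' a b = Q a b := overfill_eq_at' h (Or.inl ha)

lemma restrict_mono_s12 {V W : Set ℕ} (hVW : V ⊆ W) {Q Q' : ℕ → ℕ → ℤ}
    (h : restrictFun W Q' = restrictFun W Q) : restrictFun V Q' = restrictFun V Q := by
  funext a b
  unfold restrictFun
  split_ifs with hab
  · exact restrict_eq_at h (hVW hab.1) (hVW hab.2)
  · rfl

lemma overfill_mono_s12 {V W : Set ℕ} (hVW : V ⊆ W) {Q Q' : ℕ → ℕ → ℤ}
    (h : overfillFun W Q' = overfillFun W Q) : overfillFun V Q' = overfillFun V Q := by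
  funext a b
  unfold overfillFun
  split_ifs with hab
  · exact overfill_eq_at' h (hab.imp (@hVW a) (@hVW b))
  · rfl

lemma patch_cyclic (Q : AF ℕ) (n : ℕ) : ¬ AcyclicQ (patchAF Q n) := fun hA =>
  hA ⟨3, fun j => n + j % 3, by norm_num, patch_cycle_spec Q n⟩

lemma patch_lf {Q : AF ℕ} (hQ : Q ∈ LFset ℕ) (n : ℕ) : patchAF Q n ∈ LFset ℕ := by
  intro x
  apply Set.Finite.subset ((hQ x).union (Set.Finite.insert n (Set.Finite.insert (n+1) (Set.finite_singleton (n+2)))))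
  intro y hy
  simp only [Set.mem_setOf_eq] at hy
  by_cases hc : (x = n ∨ x = n+1 ∨ x = n+2) ∧ (y = n ∨ y = n+1 ∨ y = n+2)
  · exact Or.inr (by simpa using hc.2)
  · refine Or.inl ?_
    simp only [Set.mem_setOf_eq]
    rwa [show (patchAF Q n).1 x y = Q.1 x y from by
      simp only [patchAF, patchF]; rw [if_neg hc]] at hy

lemma not_acyclic_of_restrict {Q Q' : AF ℕ} {V : Set ℕ} {ℓ : ℕ} {v : ℕ → ℕ}
    (hℓ : 1 ≤ ℓ) (hmem : ∀ j < ℓ, v j ∈ V)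
    (hcyc : ∀ j < ℓ, 0 < Q.1 (v j) (v ((j+1) % ℓ)))
    (h : Q' ∈ Uset Q V) : ¬ AcyclicQ Q' := fun hA =>
  hA ⟨ℓ, v, hℓ, fun j hj => by
    rw [restrict_eq_at h (hmem j hj) (hmem _ (Nat.mod_lt _ (by omega)))]
    exact hcyc j hj⟩

lemma not_acyclic_of_overfill {Q Q' : AF ℕ} {V : Set ℕ} {ℓ : ℕ} {v : ℕ → ℕ}
    (hℓ : 1 ≤ ℓ) (hmem : ∀ j < ℓ, v j ∈ V)
    (hcyc : ∀ j < ℓ, 0 < Q.1 (v j) (v ((j+1) % ℓ)))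
    (h : Q' ∈ Wset Q V) : ¬ AcyclicQ Q' := fun hA =>
  hA ⟨ℓ, v, hℓ, fun j hj => by
    rw [overfill_eq_at h (hmem j hj)]
    exact hcyc j hj⟩

lemma weak_basic {O : Set (AF ℕ)} (hO : TopologicalSpace.GenerateOpen (UBasis ℕ) O) :
    ∀ Q ∈ O, ∃ V : Set ℕ, V.Finite ∧ Uset Q V ⊆ O := by
  induction hO with
  | basic U hU =>
      obtain ⟨Q0, V, hV, rfl⟩ := hU
      intro Q hQ
      refine ⟨V, hV, fun Q' hQ' => ?_⟩
      show restrictFun V Q'.1 = restrictFun V Q0.1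
      rw [show restrictFun V Q'.1 = restrictFun V Q.1 from hQ']
      exact hQ
  | univ => exact fun Q _ => ⟨∅, Set.finite_empty, fun _ _ => trivial⟩
  | inter s t _ _ ihs iht =>
      intro Q hQ
      obtain ⟨V1, hV1, h1⟩ := ihs Q hQ.1
      obtain ⟨V2, hV2, h2⟩ := iht Q hQ.2
      exact ⟨V1 ∪ V2, hV1.union hV2, fun Q' hQ' =>
        ⟨h1 (restrict_mono_s12 Set.subset_union_left hQ'),
         h2 (restrict_mono_s12 Set.subset_union_right hQ')⟩⟩
  | sUnion S _ ih =>
      intro Q hQ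
      obtain ⟨s, hs, hQs⟩ := hQ
      obtain ⟨V, hV, h⟩ := ih s hs Q hQs
      exact ⟨V, hV, fun Q' hQ' => ⟨s, hs, h hQ'⟩⟩

lemma strong_basic {O : Set (AF ℕ)} (hO : TopologicalSpace.GenerateOpen (WBasis ℕ) O) :
    ∀ Q ∈ O, ∃ V : Set ℕ, V.Finite ∧ Wset Q V ⊆ O := by
  induction hO with
  | basic U hU =>
      obtain ⟨Q0, V, hV, rfl⟩ := hU
      intro Q hQ
      refine ⟨V, hV, fun Q' hQ' => ?_⟩
      show overfillFun V Q'.1 = overfillFun V Q0.1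
      rw [show overfillFun V Q'.1 = overfillFun V Q.1 from hQ']
      exact hQ
  | univ => exact fun Q _ => ⟨∅, Set.finite_empty, fun _ _ => trivial⟩
  | inter s t _ _ ihs iht =>
      intro Q hQ
      obtain ⟨V1, hV1, h1⟩ := ihs Q hQ.1
      obtain ⟨V2, hV2, h2⟩ := iht Q hQ.2
      exact ⟨V1 ∪ V2, hV1.union hV2, fun Q' hQ' =>
        ⟨h1 (overfill_mono_s12 Set.subset_union_left hQ'),
         h2 (overfill_mono_s12 Set.subset_union_right hQ')⟩⟩
  | sUnion S _ ih =>
      intro Q hQ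
      obtain ⟨s, hs, hQs⟩ := hQ
      obtain ⟨V, hV, h⟩ := ih s hs Q hQs
      exact ⟨V, hV, fun Q' hQ' => ⟨s, hs, h hQ'⟩⟩

noncomputable def zeroAF : AF ℕ := ⟨fun _ _ => 0, fun _ _ => by simp⟩

lemma cyclic_open_weak :
    @IsOpen _ (weakTop ℕ) {Q : AF ℕ | AcyclicQ Q}ᶜ := by
  letI := weakTop ℕ
  rw [isOpen_iff_forall_mem_open]
  intro Q hQ
  simp only [Set.mem_compl_iff, Set.mem_setOf_eq, AcyclicQ, not_not] at hQ
  obtain ⟨ℓ, v, hℓ, hcyc⟩ := hQ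
  refine ⟨Uset Q (v '' Set.Iio ℓ), fun Q' hQ' => ?_, ?_, ?_⟩
  · simp only [Set.mem_compl_iff, Set.mem_setOf_eq]
    exact not_acyclic_of_restrict hℓ (fun j hj => Set.mem_image_of_mem v hj) hcyc hQ'
  · exact TopologicalSpace.isOpen_generateFrom_of_mem ⟨Q, _, (Set.finite_Iio ℓ).image v, rfl⟩
  · exact rfl

lemma cyclic_open_strong :
    @IsOpen _ (strongTop ℕ) {Q : AF ℕ | AcyclicQ Q}ᶜ := by
  letI := strongTop ℕ
  rw [isOpen_iff_forall_mem_open]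
  intro Q hQ
  simp only [Set.mem_compl_iff, Set.mem_setOf_eq, AcyclicQ, not_not] at hQ
  obtain ⟨ℓ, v, hℓ, hcyc⟩ := hQ
  refine ⟨Wset Q (v '' Set.Iio ℓ), fun Q' hQ' => ?_, ?_, ?_⟩
  · simp only [Set.mem_compl_iff, Set.mem_setOf_eq]
    exact not_acyclic_of_overfill hℓ (fun j hj => Set.mem_image_of_mem v hj) hcyc hQ'
  · exact TopologicalSpace.isOpen_generateFrom_of_mem ⟨Q, _, (Set.finite_Iio ℓ).image v, rfl⟩
  · exact rfl

/-- Acyclic quivers form a closed, non-dense set with empty interior, both in `AF`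
(weak topology) and in `LF` (subspace of the strong topology). -/
theorem acyclicity_complexity :
    (@IsClosed _ (weakTop ℕ) {Q : AF ℕ | AcyclicQ Q} ∧
     ¬ @Dense _ (weakTop ℕ) {Q : AF ℕ | AcyclicQ Q} ∧
     @interior _ (weakTop ℕ) {Q : AF ℕ | AcyclicQ Q} = ∅) ∧
    (@IsClosed _ LFtop {Q : LFsub | AcyclicQ Q.1} ∧
     ¬ @Dense _ LFtop {Q : LFsub | AcyclicQ Q.1} ∧
     @interior _ LFtop {Q : LFsub | AcyclicQ Q.1} = ∅) := by
  have hCmem : ∀ j < 3, (fun j => 0 + j % 3) j ∈ Set.Iio 3 := by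
    intro j _; simp only [Set.mem_Iio]; omega
  constructor
  · letI := weakTop ℕ
    refine ⟨?_, ?_, ?_⟩
    · rw [← isOpen_compl_iff]; exact cyclic_open_weak
    · intro hD
      have hU : IsOpen (Uset (patchAF zeroAF 0) (Set.Iio 3)) :=
        TopologicalSpace.isOpen_generateFrom_of_mem ⟨_, _, Set.finite_Iio 3, rfl⟩
      obtain ⟨Q', hQ'U, hQ'S⟩ := hD.inter_open_nonempty _ hU ⟨_, rfl⟩
      exact not_acyclic_of_restrict (by norm_num) hCmem (patch_cycle_spec zeroAF 0) hQ'U hQ'S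
    · rw [Set.eq_empty_iff_forall_notMem]
      intro Q hQ
      obtain ⟨O, hOsub, hOopen, hQO⟩ := mem_interior.mp hQ
      obtain ⟨V, hVfin, hsub⟩ := weak_basic hOopen Q hQO
      obtain ⟨m, hm⟩ := hVfin.bddAbove
      have hmemU : patchAF Q (m+1) ∈ Uset Q V :=
        restrict_patch (fun x hx => Nat.lt_succ_of_le (hm hx)) Q.1
      exact patch_cyclic Q (m+1) (hOsub (hsub hmemU))
  · letI : TopologicalSpace (AF ℕ) := strongTop ℕ
    letI := LFtop
    refine ⟨?_, ?_, ?_⟩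
    · rw [← isOpen_compl_iff]
      exact isOpen_induced_iff.mpr ⟨{Q : AF ℕ | AcyclicQ Q}ᶜ, cyclic_open_strong, rfl⟩
    · intro hD
      have hClf : patchAF zeroAF 0 ∈ LFset ℕ :=
        patch_lf (fun x => by simp [zeroAF, LFset]) 0
      have hU : IsOpen ((Subtype.val : LFsub → AF ℕ) ⁻¹' Wset (patchAF zeroAF 0) (Set.Iio 3)) :=
        isOpen_induced_iff.mpr ⟨_,
          TopologicalSpace.isOpen_generateFrom_of_mem ⟨_, _, Set.finite_Iio 3, rfl⟩, rfl⟩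
      obtain ⟨Q', hQ'U, hQ'S⟩ := hD.inter_open_nonempty _ hU ⟨⟨_, hClf⟩, rfl⟩
      exact not_acyclic_of_overfill (by norm_num) hCmem (patch_cycle_spec zeroAF 0) hQ'U hQ'S
    · rw [Set.eq_empty_iff_forall_notMem]
      intro Q hQ
      obtain ⟨O, hOsub, hOopen, hQO⟩ := mem_interior.mp hQ
      obtain ⟨O₂, hO₂, rfl⟩ := isOpen_induced_iff.mp hOopen
      obtain ⟨V, hVfin, hsub⟩ := strong_basic hO₂ Q.1 hQO
      obtain ⟨m, hm⟩ := hVfin.bddAbove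
      have hmemW : patchAF Q.1 (m+1) ∈ Wset Q.1 V :=
        overfill_patch (fun x hx => Nat.lt_succ_of_le (hm hx)) Q.1.1
      exact patch_cyclic Q.1 (m+1)
        (hOsub (show (⟨patchAF Q.1 (m+1), patch_lf Q.2 (m+1)⟩ : LFsub) ∈ _ from hsub hmemW))
end
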